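/- arXiv:1310.2555 — 7 statements merged into one kernel-verified Lean document; each statement's English description precedes it below -/
import Mathlib

section
/- If V is a vector space of dimension r+m over a finite field with q elements, and W₁,...,Wₙ are subspaces such that for distinct indices j₁,...,j_k the intersection W_{j₁} ∩ ... ∩ W_{j_k} has dimension r + m - m_{j₁} - ... - m_{j_k} where m₁+...+mₙ = m and each mᵢ ≥ 1, then the union W₁ ∪ ... ∪ Wₙ has cardinality q^{r+m}(1 - ∏ᵢ(1 - q^{-mᵢ})), which is strictly less than q^{r+m}. -/
open Finset

/-- If `V` is a vector space of dimension `r + m` over a finite field with `q` elements,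
and `W₁, …, Wₙ` are subspaces such that for distinct indices `j₁, …, j_k` the intersection
`W_{j₁} ∩ ⋯ ∩ W_{j_k}` has dimension `r + m - m_{j₁} - ⋯ - m_{j_k}`, where
`m₁ + ⋯ + mₙ = m` and each `mᵢ ≥ 1`, then the union `W₁ ∪ ⋯ ∪ Wₙ` has cardinality
`q^(r+m) * (1 - ∏ᵢ (1 - q^{-mᵢ}))`, which is strictly less than `q^(r+m)`. -/
theorem stmt_1 (K V : Type) [Field K] [Fintype K] [AddCommGroup V] [Module K V]
    [FiniteDimensional K V] (q r m n : ℕ) (hq : q = Fintype.card K)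
    (hV : Module.finrank K V = r + m)
    (mm : Fin n → ℕ) (hmm : ∀ i, 1 ≤ mm i) (hm : ∑ i, mm i = m)
    (W : Fin n → Submodule K V)
    (hdim : ∀ s : Finset (Fin n), s.Nonempty →
      Module.finrank K ↥(⨅ j ∈ s, W j) = r + m - ∑ j ∈ s, mm j) :
    (Nat.card ↥(⋃ i, (W i : Set V)) : ℝ)
      = (q : ℝ) ^ (r + m) * (1 - ∏ i, (1 - (q : ℝ) ^ (-(mm i : ℤ)))) ∧
    Nat.card ↥(⋃ i, (W i : Set V)) < q ^ (r + m) := by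
  classical
  haveI : Finite V := Module.finite_iff_finite (R := K) (M := V) |>.mp inferInstance
  haveI : Fintype V := Fintype.ofFinite V
  have hq2 : 2 ≤ q := by rw [hq]; exact Fintype.one_lt_card
  have hq0 : (0:ℝ) < q := by positivity
  have hq1 : (1:ℝ) < q := by exact_mod_cast lt_of_lt_of_le one_lt_two (by exact_mod_cast hq2)
  set S : Fin n → Finset V := fun i => (W i : Set V).toFinset with hS
  -- sums of mm over subsets are ≤ r + m
  have hle : ∀ t : Finset (Fin n), ∑ j ∈ t, mm j ≤ r + m := fun t => by
    calc ∑ j ∈ t, mm j ≤ ∑ j, mm j := Finset.sum_le_sum_of_subset (Finset.subset_univ t)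
    _ = m := hm
    _ ≤ r + m := le_add_self
  -- cardinality of intersections
  have hcard : ∀ (t : Finset (Fin n)) (ht : t.Nonempty),
      #(t.inf' ht S) = q ^ (r + m - ∑ j ∈ t, mm j) := by
    intro t ht
    have h1 : t.inf' ht S = ((⨅ j ∈ t, W j : Submodule K V) : Set V).toFinset := by
      ext x
      simp [hS, Submodule.mem_iInf]
    rw [h1, Set.toFinset_card]
    have : Fintype.card ↥((⨅ j ∈ t, W j : Submodule K V) : Set V)
        = Fintype.card ↥(⨅ j ∈ t, W j : Submodule K V) := rfl
    rw [this, Module.card_eq_pow_finrank (K := K), hdim t ht, hq]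
  -- union as a Finset
  have hU : (⋃ i, (W i : Set V)) = ↑((univ : Finset (Fin n)).biUnion S) := by
    ext x; simp [hS]
  have hNc : Nat.card ↥(⋃ i, (W i : Set V)) = #((univ : Finset (Fin n)).biUnion S) := by
    rw [Nat.card_coe_set_eq, hU, Set.ncard_coe_finset]
  -- inclusion-exclusion, integer version, with cards computed
  have hIE : (#((univ : Finset (Fin n)).biUnion S) : ℤ)
      = ∑ t ∈ ((univ : Finset (Fin n)).powerset.filter (·.Nonempty)),
          (-1 : ℤ) ^ (#t + 1) * (q : ℤ) ^ (r + m - ∑ j ∈ t, mm j) := by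
    rw [Finset.inclusion_exclusion_card_biUnion]
    rw [← Finset.sum_coe_sort (((univ : Finset (Fin n)).powerset.filter (·.Nonempty)))
      (fun t => (-1 : ℤ) ^ (#t + 1) * (q : ℤ) ^ (r + m - ∑ j ∈ t, mm j))]
    congr 1
    ext t
    rw [hcard t.1 (Finset.mem_filter.1 t.2).2]
    push_cast
    ring
  -- the key real identity
  have key : (Nat.card ↥(⋃ i, (W i : Set V)) : ℝ)
      = ∑ t ∈ ((univ : Finset (Fin n)).powerset.filter (·.Nonempty)),
          (-1 : ℝ) ^ (#t + 1) * (q : ℝ) ^ (r + m - ∑ j ∈ t, mm j) := by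
    rw [hNc]
    exact_mod_cast congrArg (Int.cast : ℤ → ℝ) hIE
  -- expand the product on the RHS
  have hprod : ∀ t : Finset (Fin n), ∏ j ∈ t, (q : ℝ) ^ (-(mm j : ℤ))
      = ((q : ℝ) ^ (∑ j ∈ t, mm j))⁻¹ := by
    intro t
    rw [← Finset.prod_pow_eq_pow_sum, ← Finset.prod_inv_distrib]
    refine Finset.prod_congr rfl fun j _ => ?_
    rw [zpow_neg, zpow_natCast]
  have hexp : (q : ℝ) ^ (r + m) * (1 - ∏ i, (1 - (q : ℝ) ^ (-(mm i : ℤ))))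
      = ∑ t ∈ ((univ : Finset (Fin n)).powerset.filter (·.Nonempty)),
          (-1 : ℝ) ^ (#t + 1) * (q : ℝ) ^ (r + m - ∑ j ∈ t, mm j) := by
    have e1 : ∏ i, (1 - (q : ℝ) ^ (-(mm i : ℤ)))
        = ∑ t ∈ (univ : Finset (Fin n)).powerset,
            (-1 : ℝ) ^ #t * ∏ j ∈ t, (q : ℝ) ^ (-(mm j : ℤ)) := by
      rw [Finset.prod_sub (fun _ => (1:ℝ)) (fun i => (q : ℝ) ^ (-(mm i : ℤ)))]
      simp
    rw [e1]
    rw [← Finset.sum_filter_add_sum_filter_not ((univ : Finset (Fin n)).powerset) (·.Nonempty)]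
    have e2 : (univ : Finset (Fin n)).powerset.filter (¬ ·.Nonempty) = {∅} := by
      ext t
      simp [Finset.not_nonempty_iff_eq_empty]
    rw [e2, Finset.sum_singleton]
    simp only [Finset.card_empty, pow_zero, Finset.prod_empty, one_mul]
    rw [show ∀ s : ℝ, (1:ℝ) - (s + 1) = -s from fun s => by ring, mul_neg, Finset.mul_sum,
      ← Finset.sum_neg_distrib]
    refine Finset.sum_congr rfl fun t ht => ?_
    rw [hprod t]
    have hx : (q:ℝ) ^ (r + m - ∑ j ∈ t, mm j) = (q:ℝ) ^ (r + m) / (q:ℝ) ^ (∑ j ∈ t, mm j) :=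
      pow_sub₀ _ (by positivity) (hle t)
    rw [hx]
    field_simp
    ring
  constructor
  · rw [key, hexp]
  · -- strict inequality
    have hprodpos : 0 < ∏ i, (1 - (q : ℝ) ^ (-(mm i : ℤ))) := by
      apply Finset.prod_pos
      intro i _
      have h1 : (q : ℝ) ^ (-(mm i : ℤ)) < 1 := by
        rw [zpow_neg, zpow_natCast]
        rw [inv_lt_one_iff₀]
        right
        exact one_lt_pow₀ hq1 (Nat.one_le_iff_ne_zero.mp (hmm i))
      linarith
    have hlt : (Nat.card ↥(⋃ i, (W i : Set V)) : ℝ) < (q : ℝ) ^ (r + m) := by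
      rw [key, ← hexp]
      have : (q:ℝ) ^ (r+m) * (1 - ∏ i, (1 - (q : ℝ) ^ (-(mm i : ℤ))))
          < (q:ℝ) ^ (r+m) * 1 := by
        apply mul_lt_mul_of_pos_left _ (by positivity)
        linarith
      simpa using this
    exact_mod_cast hlt
end

section
/- Let A be a finite set of algebraic numbers, α a rational number not in A, and c > 1 a real number. Then there exists a fractional linear transformation ψ with rational coefficients such that ψ(α) is rational with |ψ(α)| > c, and |ψ(β)| < 1 for every β in A. -/
/-!
Take `ψ(z) = s / (z - α + t)` with rationals `0 < t` and `c t < s`, so that `ψ(α) = s / t > c`.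
Since `A` is finite and misses `α`, its points stay at distance at least some `δ > 0` from `α`;
choosing moreover `s + t < δ` gives `‖z - α + t‖ ≥ δ - t > s` for `z ∈ A`, i.e. `‖ψ(z)‖ < 1`.
-/

theorem Finset.exists_pos_le_dist_of_notMem {X : Type*} [MetricSpace X] {s : Finset X} {x : X}
    (hx : x ∉ s) : ∃ δ > 0, ∀ y ∈ s, δ ≤ dist y x := by
  obtain ⟨δ, hδ, hball⟩ := Metric.isOpen_iff.mp s.isClosed.isOpen_compl x hx
  exact ⟨δ, hδ, fun y hy => not_lt.mp fun h => hball (Metric.mem_ball.mpr h) hy⟩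

theorem exists_rat_mul_lt_and_add_lt {δ : ℝ} (hδ : 0 < δ) (c : ℝ) :
    ∃ s t : ℚ, 0 < t ∧ c * t < s ∧ (s + t : ℝ) < δ := by
  have hc : 0 < |c| + 1 := by positivity
  obtain ⟨t, ht, htδ⟩ := exists_rat_btwn (div_pos hδ hc)
  rw [lt_div_iff₀ hc] at htδ
  have hct : c * t < δ - t := by nlinarith [le_abs_self c]
  obtain ⟨s, hcs, hsδ⟩ := exists_rat_btwn hct
  exact ⟨s, t, by exact_mod_cast ht, hcs, by linarith⟩

theorem norm_lt_norm_add_of_add_lt {E : Type*} [SeminormedAddCommGroup E] {s w t : E}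
    (h : ‖s‖ + ‖t‖ < ‖w‖) : ‖s‖ < ‖w + t‖ := by
  have := norm_sub_norm_le w (-t)
  rw [sub_neg_eq_add, norm_neg] at this
  linarith

theorem stmt_3_general (A : Finset ℂ)
    (α : ℚ) (hα : (α : ℂ) ∉ A) (c : ℝ) (hc : 1 < c) :
    ∃ a b c' d : ℚ, a * d - b * c' ≠ 0 ∧
      (c' : ℂ) * α + d ≠ 0 ∧
      (∃ w : ℚ, ((a : ℂ) * α + b) / ((c' : ℂ) * α + d) = (w : ℂ) ∧ c < |w|) ∧
      ∀ β ∈ A, (c' : ℂ) * β + d ≠ 0 ∧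
        ‖((a : ℂ) * β + b) / ((c' : ℂ) * β + d)‖ < 1 := by
  obtain ⟨δ, hδ, hδA⟩ := A.exists_pos_le_dist_of_notMem hα
  obtain ⟨s, t, ht, hcts, hstδ⟩ := exists_rat_mul_lt_and_add_lt hδ c
  have htR : (0 : ℝ) < t := by exact_mod_cast ht
  have hs : (0 : ℝ) < s := by nlinarith
  have hs' : (0 : ℚ) < s := by exact_mod_cast hs
  have ht' : (t : ℂ) ≠ 0 := by exact_mod_cast ht.ne'
  refine ⟨0, s, 1, t - α, by simpa using hs'.ne', by push_cast; simpa using ht',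
    ⟨s / t, by push_cast; ring_nf, ?_⟩, fun β hβ => ?_⟩
  · rw [abs_of_pos (div_pos hs' ht), Rat.cast_div, lt_div_iff₀ htR]
    exact hcts
  · have hlt : ‖(s : ℂ)‖ < ‖(β - α) + t‖ := by
      refine norm_lt_norm_add_of_add_lt ?_
      rw [← dist_eq_norm]
      have := hδA β hβ
      simp only [Complex.norm_ratCast, abs_of_pos hs, abs_of_pos htR]
      linarith
    have hden : ((1 : ℚ) : ℂ) * β + ((t - α : ℚ) : ℂ) = β - α + t := by push_cast; ring
    have hpos := (norm_nonneg _).trans_lt hlt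
    rw [hden, show ((0 : ℚ) : ℂ) * β + s = s by simp, norm_div]
    exact ⟨norm_pos_iff.mp hpos, (div_lt_one hpos).mpr hlt⟩

/-- Let `A` be a finite set of algebraic numbers, `α` a rational number not in `A`, and
`c > 1` a real number.  Then there exists a fractional linear transformation `ψ` with
rational coefficients such that `ψ(α)` is rational with `|ψ(α)| > c`, and `|ψ(β)| < 1`
for every `β ∈ A`. -/
theorem stmt_3 (A : Finset ℂ) (hA : ∀ β ∈ A, IsAlgebraic ℚ β)
    (α : ℚ) (hα : (α : ℂ) ∉ A) (c : ℝ) (hc : 1 < c) :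
    ∃ a b c' d : ℚ, a * d - b * c' ≠ 0 ∧
      (c' : ℂ) * α + d ≠ 0 ∧
      (∃ w : ℚ, ((a : ℂ) * α + b) / ((c' : ℂ) * α + d) = (w : ℂ) ∧ c < |w|) ∧
      ∀ β ∈ A, (c' : ℂ) * β + d ≠ 0 ∧
        ‖((a : ℂ) * β + b) / ((c' : ℂ) * β + d)‖ < 1 :=
  stmt_3_general A α hα c hc
end

section
/- Let f be a polynomial with rational coefficients of degree d ≥ 2. Then g(x) := res_y(f′(y), f(y) − x) is a polynomial in ℚ[x] of degree d − 1 whose set of roots equals the set of finite critical values of f; moreover, if the leading coefficient of f is an integer, so is the leading coefficient of g. -/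
/-!
Reversing the order of the rows and columns of `sylvesterMatrix` and transposing gives
Mathlib's `Polynomial.sylvester`, so `g` is Mathlib's resultant. Over `ℂ` the derivative splits,
and the Poisson formula `Res(f', f - x) = lc(f')^d ∏_{f'(γ) = 0} (f(γ) - x)` exhibits `g` as the
nonzero constant `(-1)^(d-1) (d · lc f)^d` times `∏ (x - f(γ))`, the product running over the
`d - 1` critical points counted with multiplicity. Degree, roots and leading coefficient of `g`
are read off from this factorisation.
-/

open Polynomial

/-- The Sylvester matrix of two polynomials `p` (regarded as having degree `m`) and
`q` (regarded as having degree `n`). -/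
noncomputable def sylvesterMatrix {R : Type*} [CommRing R] (m n : ℕ) (p q : R[X]) :
    Matrix (Fin (n + m)) (Fin (n + m)) R :=
  Matrix.of fun i j =>
    if (i : ℕ) < n then
      (if (i : ℕ) ≤ (j : ℕ) ∧ (j : ℕ) ≤ (i : ℕ) + m then p.coeff (m + (i : ℕ) - (j : ℕ)) else 0)
    else
      (if (i : ℕ) - n ≤ (j : ℕ) ∧ (j : ℕ) ≤ (i : ℕ) - n + n then
        q.coeff (n + ((i : ℕ) - n) - (j : ℕ)) else 0)

/-- The resultant of `p` (of degree `m`) and `q` (of degree `n`). -/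
noncomputable def resultant {R : Type*} [CommRing R] (m n : ℕ) (p q : R[X]) : R :=
  (sylvesterMatrix m n p q).det

theorem sylvesterMatrix_eq_transpose_submatrix_sylvester {R : Type*} [CommRing R] (m n : ℕ)
    (p q : R[X]) :
    sylvesterMatrix m n p q =
      Matrix.transpose ((sylvester p q m n).submatrix (Fin.rev ∘ Fin.cast (add_comm n m))
        (Fin.rev ∘ Fin.cast (add_comm n m))) := by
  ext i j
  have hi := i.isLt
  have hj := j.isLt
  simp only [sylvesterMatrix, sylvester, Matrix.of_apply, Matrix.transpose_apply,
    Matrix.submatrix_apply, Function.comp_apply, Fin.addCases, Fin.val_rev, Fin.val_cast,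
    Fin.val_subNat, Fin.val_castLT, Set.mem_Icc, eq_rec_constant]
  split_ifs <;> first | rfl | omega | (congr 1; omega)

theorem resultant_eq_polynomial_resultant {R : Type*} [CommRing R] (m n : ℕ) (p q : R[X]) :
    resultant m n p q = Polynomial.resultant p q m n := by
  rw [_root_.resultant, sylvesterMatrix_eq_transpose_submatrix_sylvester, Matrix.det_transpose]
  exact Matrix.det_submatrix_equiv_self ((finCongr (add_comm n m)).trans Fin.revPerm) _

theorem Polynomial.resultant_map_C_sub_C_X {K : Type*} [Field K] (f q : K[X]) (n : ℕ)
    (hq : q.natDegree ≤ n) (hf : f.Splits) :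
    Polynomial.resultant (f.map C) (q.map C - C X) f.natDegree n =
      C ((-1) ^ f.natDegree * f.leadingCoeff ^ n) *
        ((f.roots.map q.eval).map fun a => X - C a).prod := by
  have h := resultant_eq_prod_eval (f.map C) (q.map C - C X) n
    (by rwa [natDegree_sub_C, natDegree_map]) (hf.map C)
  have heval : ∀ α, (q.map C - C X).eval (C α) = -(X - C (q.eval α)) := by
    intro α
    rw [eval_sub, eval_C, eval_map, eval₂_at_apply, neg_sub]
  have hvalues : (f.roots.map C).map (fun x => (q.map C - C X).eval x) =
      ((f.roots.map q.eval).map fun a => X - C a).map Neg.neg := by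
    simp only [Multiset.map_map, Function.comp_def, heval]
  rw [natDegree_map] at h
  rw [h, leadingCoeff_map_of_injective C_injective, hf.roots_map, hvalues, Multiset.prod_map_neg,
    Multiset.card_map, Multiset.card_map, ← hf.natDegree_eq_card_roots, C_mul, C_pow, C_pow,
    map_neg, map_one]
  ring

theorem map_resultant_map_C_sub_C_X {K L : Type*} [Field K] [Field L] [IsAlgClosed L]
    (φ : K →+* L) (p q : K[X]) (m n : ℕ) (hp : p.natDegree = m) (hq : q.natDegree ≤ n) :
    (resultant m n (p.map C) (q.map C - C X)).map φ =
      C (φ ((-1) ^ m * p.leadingCoeff ^ n)) *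
        (((p.map φ).roots.map (q.map φ).eval).map fun a => X - C a).prod := by
  have hP : (p.map C).map (mapRingHom φ) = (p.map φ).map C := by
    rw [map_map, mapRingHom_comp_C, ← map_map]
  have hQ : (q.map C - C X).map (mapRingHom φ) = (q.map φ).map C - C X := by
    rw [Polynomial.map_sub, map_map, mapRingHom_comp_C, ← map_map, map_C, coe_mapRingHom, map_X]
  rw [resultant_eq_polynomial_resultant, ← coe_mapRingHom, ← resultant_map_map, hP, hQ, ← hp,
    ← natDegree_map φ, resultant_map_C_sub_C_X _ _ n (by rwa [natDegree_map])
      (IsAlgClosed.splits _), leadingCoeff_map, natDegree_map]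
  simp only [map_mul, map_pow, map_neg, map_one, coe_mapRingHom]

/-- Let `f ∈ ℚ[x]` have degree `d ≥ 2`.  Then `g(x) := res_y(f'(y), f(y) - x)` is a
polynomial in `ℚ[x]` of degree `d - 1` whose set of roots (in `ℚ̄ ⊆ ℂ`) equals the set
of finite critical values of `f`; moreover, if the leading coefficient of `f` is an
integer, so is the leading coefficient of `g`. -/
theorem stmt_6 (f : ℚ[X]) (d : ℕ) (hd : 2 ≤ d) (hdeg : f.natDegree = d)
    (g : ℚ[X])
    (hg : g = resultant (d - 1) d ((derivative f).map (C : ℚ →+* ℚ[X]))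
      (f.map (C : ℚ →+* ℚ[X]) - C X)) :
    g.natDegree = d - 1 ∧ g ≠ 0 ∧
    (∀ z : ℂ, (g.map (algebraMap ℚ ℂ)).IsRoot z
      ↔ ∃ γ : ℂ, ((derivative f).map (algebraMap ℚ ℂ)).eval γ = 0 ∧
          (f.map (algebraMap ℚ ℂ)).eval γ = z) ∧
    ((∃ k : ℤ, f.leadingCoeff = (k : ℚ)) → ∃ k : ℤ, g.leadingCoeff = (k : ℚ)) := by
  have hdeg' : (derivative f).natDegree = d - 1 := by rw [natDegree_derivative, hdeg]
  have hderiv0 : derivative f ≠ 0 := derivative_ne_zero.2 (by omega)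
  have hc : (-1) ^ (d - 1) * (derivative f).leadingCoeff ^ d ≠ 0 :=
    mul_ne_zero (by simp) (pow_ne_zero _ (leadingCoeff_ne_zero.2 hderiv0))
  have hgC := hg ▸ map_resultant_map_C_sub_C_X (algebraMap ℚ ℂ) (derivative f) f (d - 1) d hdeg'
    hdeg.le
  have hcard : (((derivative f).map (algebraMap ℚ ℂ)).roots.map
      (f.map (algebraMap ℚ ℂ)).eval).card = d - 1 := by
    rw [Multiset.card_map, ← (IsAlgClosed.splits _).natDegree_eq_card_roots, natDegree_map, hdeg']
  have hdegg : g.natDegree = d - 1 := by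
    rw [← natDegree_map (algebraMap ℚ ℂ), hgC, natDegree_C_mul (by simpa using hc),
      natDegree_multiset_prod_X_sub_C_eq_card, hcard]
  have hg0 : g ≠ 0 := by rintro rfl; simp at hdegg; omega
  have hlcg : g.leadingCoeff = (-1) ^ (d - 1) * (derivative f).leadingCoeff ^ d := by
    apply (algebraMap ℚ ℂ).injective
    rw [← leadingCoeff_map, hgC, leadingCoeff_mul, leadingCoeff_C,
      (monic_multiset_prod_of_monic _ _ fun a _ => monic_X_sub_C a).leadingCoeff, mul_one]
  refine ⟨hdegg, hg0, fun z => ?_, ?_⟩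
  · rw [← mem_roots (map_ne_zero hg0), hgC, roots_C_mul _ (by simpa using hc),
      roots_multiset_prod_X_sub_C, Multiset.mem_map]
    simp only [mem_roots (map_ne_zero hderiv0), IsRoot.def]
  · rintro ⟨k, hk⟩
    exact ⟨(-1) ^ (d - 1) * (k * d) ^ d, by rw [hlcg, leadingCoeff_derivative, hdeg, hk]; push_cast; ring⟩
end

section
/- Let B ⊂ ℤ be a finite set of integers with |B| ≥ 2, and β an integer not in B. Let p be a prime not dividing γ − β for any γ ∈ B, and set δ = β + p, B′ = B ∪ {δ} = {b₁,...,b_m} with b_m = δ. With n_i as in the partial fraction construction, the rational function f(x) = ∏(x−b_i)^{2n_i} satisfies: f is ramified at every point of B′, the branch locus of f is {0,1,∞}, and f(β) ∉ {0,1,∞}. -/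
open Polynomial Finset OnePoint
open scoped Classical

variable {F : Type*} [Field F]

/-- Evaluation of a rational function at a point of `ℙ¹`. -/
noncomputable def rEval (f : RatFunc F) (a : OnePoint F) : OnePoint F :=
  Option.elim (a : Option F)
    (if f.denom.degree < f.num.degree then (∞ : OnePoint F)
      else OnePoint.some (f.num.coeff f.denom.natDegree / f.denom.leadingCoeff))
    (fun x => if f.denom.eval x = 0 then (∞ : OnePoint F)
      else OnePoint.some (f.num.eval x / f.denom.eval x))

/-- Ramification index of a rational function at a finite point. -/
noncomputable def ramIdxFin (f : RatFunc F) (x : F) : ℕ :=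
  if f.denom.eval x = 0 then f.denom.rootMultiplicity x
  else (f.num - C (f.num.eval x / f.denom.eval x) * f.denom).rootMultiplicity x

/-- The rational function `f(1/x)`. -/
noncomputable def invSub (f : RatFunc F) : RatFunc F :=
  RatFunc.eval (algebraMap F (RatFunc F)) (RatFunc.X)⁻¹ f

/-- Ramification index of a rational function at a point of `ℙ¹`. -/
noncomputable def ramIdx (f : RatFunc F) (a : OnePoint F) : ℕ :=
  Option.elim (a : Option F) (ramIdxFin (invSub f) 0) (fun x => ramIdxFin f x)

/-- The branch locus of the morphism `ℙ¹ → ℙ¹` induced by a rational function. -/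
noncomputable def branchLocus (f : RatFunc F) : Set (OnePoint F) :=
  {w | ∃ a : OnePoint F, rEval f a = w ∧ 2 ≤ ramIdx f a}

/-!
Write `f = A / D` with coprime monic `A = ∏_{kᵢ > 0} (X - aᵢ) ^ kᵢ` and
`D = ∏_{kᵢ < 0} (X - aᵢ) ^ (-kᵢ)`, where `kᵢ = 2 nᵢ`. At a finite point `x` with `D x ≠ 0`, `f` is
ramified iff the Wronskian `D A' - D' A` vanishes at `x`, and this Wronskian is
`∏ (X - aᵢ) ^ (|kᵢ| - 1) * ∑ kᵢ ∏_{j ≠ i} (X - aⱼ)`. The normalisation of the `nᵢ` makes the last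
sum the Lagrange interpolant of a nonzero constant, so the only finite ramification points are the
`aᵢ`, which go to `0` or `∞`. The same interpolation identity, read off in degrees `m - 1` and
`m - 2` (here `m ≥ 3`), gives `∑ kᵢ = 0` and `∑ kᵢ aᵢ = 0`: the first makes `deg A = deg D`, so
`f ∞ = 1`; the second is the vanishing at `0` of the Wronskian of `f (1 / X)`, so `f` is ramified
at `∞`. Finally `f β = ∏ (β - bᵢ) ^ kᵢ` is finite and nonzero, and it is not `1` because `p`
divides `β - δ` and no other factor.
-/

theorem RatFunc.num_denom_mk_of_isCoprime {A D : F[X]} (hAD : IsCoprime A D) (hD : D ≠ 0) :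
    (RatFunc.mk A D).num = Polynomial.C D.leadingCoeff⁻¹ * A ∧
      (RatFunc.mk A D).denom = Polynomial.C D.leadingCoeff⁻¹ * D := by
  set u := Polynomial.C D.leadingCoeff⁻¹
  have hu : IsUnit u := Polynomial.isUnit_C.2 (inv_ne_zero (leadingCoeff_ne_zero.2 hD)).isUnit
  have hmon : (u * D).Monic := by rw [mul_comm]; exact monic_mul_leadingCoeff_inv hD
  have hcop : IsCoprime (u * A) (u * D) := (isCoprime_mul_unit_left hu _ _).2 hAD
  have hmk : RatFunc.mk A D =
      algebraMap F[X] (RatFunc F) (u * A) / algebraMap F[X] (RatFunc F) (u * D) := by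
    rw [RatFunc.mk_eq_div, map_mul, map_mul,
      mul_div_mul_left _ _ (RatFunc.algebraMap_ne_zero hu.ne_zero)]
  have hrel : (RatFunc.mk A D).num * (u * D) = u * A * (RatFunc.mk A D).denom :=
    (RatFunc.num_mul_eq_mul_denom_iff hmon.ne_zero).2 hmk
  have hden : (RatFunc.mk A D).denom = u * D := by
    refine eq_of_monic_of_associated (RatFunc.monic_denom _) hmon (associated_of_dvd_dvd ?_ ?_)
    · exact (RatFunc.isCoprime_num_denom _).symm.dvd_of_dvd_mul_left
        ⟨u * A, by rw [hrel]; ring⟩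
    · exact hcop.symm.dvd_of_dvd_mul_left ⟨(RatFunc.mk A D).num, by rw [← hrel]; ring⟩
  rw [hden] at hrel
  exact ⟨mul_right_cancel₀ hmon.ne_zero hrel, hden⟩

theorem rootMultiplicity_C_mul {c : F} (hc : c ≠ 0) (p : F[X]) (x : F) :
    (C c * p).rootMultiplicity x = p.rootMultiplicity x := by
  by_cases hp : p = 0
  · rw [hp, mul_zero]
  · rw [rootMultiplicity_mul (mul_ne_zero (C_ne_zero.2 hc) hp), rootMultiplicity_C, zero_add]

section ReducedFraction

variable {A D : F[X]}

theorem rEval_mk_coe (hAD : IsCoprime A D) (hD : D ≠ 0) (x : F) :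
    rEval (RatFunc.mk A D) x =
      if D.eval x = 0 then ∞ else ((A.eval x / D.eval x : F) : OnePoint F) := by
  obtain ⟨hnum, hden⟩ := RatFunc.num_denom_mk_of_isCoprime hAD hD
  have hc : D.leadingCoeff⁻¹ ≠ 0 := inv_ne_zero (leadingCoeff_ne_zero.2 hD)
  simp only [rEval, hnum, hden, eval_mul, eval_C, mul_eq_zero, hc, false_or,
    mul_div_mul_left _ _ hc]
  rfl

theorem rEval_mk_infty (hA : A.Monic) (hD : D.Monic) (hAD : IsCoprime A D)
    (hdeg : A.natDegree = D.natDegree) : rEval (RatFunc.mk A D) ∞ = ((1 : F) : OnePoint F) := by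
  obtain ⟨hnum, hden⟩ := RatFunc.num_denom_mk_of_isCoprime hAD hD.ne_zero
  rw [hD.leadingCoeff, inv_one, C_1, one_mul] at hnum hden
  have hlt : ¬ D.degree < A.degree := by
    rw [degree_eq_natDegree hA.ne_zero, degree_eq_natDegree hD.ne_zero, hdeg]
    exact lt_irrefl _
  simp only [rEval, hnum, hden, if_neg hlt, ← hdeg, hA.coeff_natDegree, hD.leadingCoeff, div_one]
  rfl

theorem ramIdxFin_mk_of_eval_eq_zero (hAD : IsCoprime A D) (hD : D ≠ 0) {x : F}
    (hx : D.eval x = 0) : ramIdxFin (RatFunc.mk A D) x = D.rootMultiplicity x := by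
  obtain ⟨-, hden⟩ := RatFunc.num_denom_mk_of_isCoprime hAD hD
  have hc : D.leadingCoeff⁻¹ ≠ 0 := inv_ne_zero (leadingCoeff_ne_zero.2 hD)
  rw [ramIdxFin, hden, if_pos (by simp [hx]), rootMultiplicity_C_mul hc]

theorem ramIdxFin_mk_of_eval_ne_zero (hAD : IsCoprime A D) (hD : D ≠ 0) {x : F}
    (hx : D.eval x ≠ 0) :
    ramIdxFin (RatFunc.mk A D) x = (A - C (A.eval x / D.eval x) * D).rootMultiplicity x := by
  obtain ⟨hnum, hden⟩ := RatFunc.num_denom_mk_of_isCoprime hAD hD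
  have hc : D.leadingCoeff⁻¹ ≠ 0 := inv_ne_zero (leadingCoeff_ne_zero.2 hD)
  rw [ramIdxFin, hnum, hden, if_neg (by simp [hc, hx]),
    ← rootMultiplicity_C_mul hc (A - C (A.eval x / D.eval x) * D)]
  congr 1
  rw [eval_mul, eval_mul, eval_C, mul_div_mul_left _ _ hc]
  ring

theorem one_lt_rootMultiplicity_iff_wronskian {x : F} (hx : D.eval x ≠ 0)
    (h0 : A - C (A.eval x / D.eval x) * D ≠ 0) :
    1 < (A - C (A.eval x / D.eval x) * D).rootMultiplicity x ↔ (wronskian D A).eval x = 0 := by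
  rw [one_lt_rootMultiplicity_iff_isRoot h0]
  simp only [IsRoot, derivative_sub, derivative_C_mul, eval_sub, eval_mul, eval_C, wronskian,
    div_mul_cancel₀ _ hx, sub_self, true_and]
  constructor <;> intro h <;> field_simp at h ⊢ <;> linear_combination h

theorem ramIdxFin_mk_lt_two (hAD : IsCoprime A D) (hD : D ≠ 0) {x : F} (hx : D.eval x ≠ 0)
    (hW : (wronskian D A).eval x ≠ 0) : ramIdxFin (RatFunc.mk A D) x < 2 := by
  rw [ramIdxFin_mk_of_eval_ne_zero hAD hD hx]
  by_cases h0 : A - C (A.eval x / D.eval x) * D = 0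
  · simp [h0]
  · have := mt (one_lt_rootMultiplicity_iff_wronskian hx h0).1 hW
    omega

theorem two_le_ramIdxFin_mk (hAD : IsCoprime A D) (hD : D ≠ 0) (hconst : ∀ v, A ≠ C v * D)
    {x : F} (hx : D.eval x ≠ 0) (hW : (wronskian D A).eval x = 0) :
    2 ≤ ramIdxFin (RatFunc.mk A D) x := by
  rw [ramIdxFin_mk_of_eval_ne_zero hAD hD hx]
  exact (one_lt_rootMultiplicity_iff_wronskian hx (sub_ne_zero.2 (hconst _))).2 hW

theorem invSub_mk_of_monic (hAD : IsCoprime A D) (hD : D.Monic) :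
    invSub (RatFunc.mk A D) =
      aeval (RatFunc.X⁻¹ : RatFunc F) A / aeval (RatFunc.X⁻¹ : RatFunc F) D := by
  obtain ⟨hnum, hden⟩ := RatFunc.num_denom_mk_of_isCoprime hAD hD.ne_zero
  rw [hD.leadingCoeff, inv_one, C_1, one_mul] at hnum hden
  rw [invSub, RatFunc.eval, hnum, hden, aeval_def, aeval_def]

end ReducedFraction

section ProdPow

variable {ι : Type*} [Fintype ι]

theorem isCoprime_prod_pow_prod_pow {R : Type*} [CommSemiring R] {P : ι → R}
    (hP : Pairwise fun i j => IsCoprime (P i) (P j)) {u w : ι → ℕ}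
    (huw : ∀ i, u i = 0 ∨ w i = 0) :
    IsCoprime (∏ i, P i ^ u i) (∏ i, P i ^ w i) := by
  refine IsCoprime.prod_left fun i _ => IsCoprime.prod_right fun j _ => ?_
  by_cases hij : i = j
  · subst hij
    rcases huw i with h | h <;> simp [h, isCoprime_one_left, isCoprime_one_right]
  · exact (hP hij).pow

theorem derivative_prod_pow_mul_prod_pow {R : Type*} [CommSemiring R] [DecidableEq ι]
    (P : ι → R[X]) {u w : ι → ℕ} (huw : ∀ i, u i + w i ≠ 0) :
    derivative (∏ i, P i ^ u i) * ∏ i, P i ^ w i =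
      (∏ i, P i ^ (u i + w i - 1)) *
        ∑ i, C (u i : R) * derivative (P i) * ∏ j ∈ univ.erase i, P j := by
  rw [derivative_prod_finset, sum_mul, mul_sum]
  refine sum_congr rfl fun i _ => ?_
  rw [derivative_pow]
  rcases Nat.eq_zero_or_pos (u i) with hu | hu
  · simp [hu]
  have hi : P i ^ (u i - 1) * P i ^ w i = P i ^ (u i + w i - 1) := by
    rw [← pow_add]; congr 1; omega
  have hrest : (∏ j ∈ univ.erase i, P j ^ u j) * ∏ j ∈ univ.erase i, P j ^ w j =
      (∏ j ∈ univ.erase i, P j ^ (u j + w j - 1)) * ∏ j ∈ univ.erase i, P j := by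
    rw [← prod_mul_distrib, ← prod_mul_distrib]
    refine prod_congr rfl fun j _ => ?_
    rw [← pow_add, ← pow_succ]
    congr 1
    have := huw j
    omega
  rw [← mul_prod_erase univ (fun j => P j ^ w j) (mem_univ i),
    ← mul_prod_erase univ (fun j => P j ^ (u j + w j - 1)) (mem_univ i)]
  calc _ = (P i ^ (u i - 1) * P i ^ w i) *
        ((∏ j ∈ univ.erase i, P j ^ u j) * ∏ j ∈ univ.erase i, P j ^ w j) *
          (C (u i : R) * derivative (P i)) := by ring
    _ = _ := by rw [hi, hrest]; ring

theorem wronskian_prod_pow {R : Type*} [CommRing R] [DecidableEq ι] (P : ι → R[X])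
    {u w : ι → ℕ} (huw : ∀ i, u i + w i ≠ 0) :
    wronskian (∏ i, P i ^ w i) (∏ i, P i ^ u i) =
      (∏ i, P i ^ (u i + w i - 1)) *
        ∑ i, C ((u i : R) - w i) * derivative (P i) * ∏ j ∈ univ.erase i, P j := by
  have hu := derivative_prod_pow_mul_prod_pow P huw
  have hw := derivative_prod_pow_mul_prod_pow P (u := w) (w := u) fun i => by
    rw [add_comm]; exact huw i
  simp only [add_comm (w _) (u _)] at hw
  simp only [wronskian, C_sub, sub_mul, sum_sub_distrib, mul_sub]
  linear_combination hu - hw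

end ProdPow

section LinearFactors

variable {ι : Type*} [Fintype ι] {a : ι → F}

theorem eval_prod_X_sub_C_pow_eq_zero_iff {u : ι → ℕ} {x : F} :
    (∏ i, (X - C (a i)) ^ u i).eval x = 0 ↔ ∃ i, u i ≠ 0 ∧ x = a i := by
  simp [eval_prod, prod_eq_zero_iff, sub_eq_zero, and_comm]

theorem rootMultiplicity_prod_X_sub_C_pow [DecidableEq ι] (ha : Function.Injective a)
    (u : ι → ℕ) (i : ι) :
    (∏ j, (X - C (a j)) ^ u j).rootMultiplicity (a i) = u i := by
  rw [← mul_prod_erase univ _ (mem_univ i)]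
  have hrest : ∏ j ∈ univ.erase i, (X - C (a j)) ^ u j ≠ 0 :=
    prod_ne_zero_iff.2 fun j _ => pow_ne_zero _ (X_sub_C_ne_zero _)
  rw [rootMultiplicity_mul (mul_ne_zero (pow_ne_zero _ (X_sub_C_ne_zero _)) hrest),
    rootMultiplicity_X_sub_C_pow, rootMultiplicity_eq_zero, add_zero]
  simp [IsRoot, eval_prod, prod_eq_zero_iff, sub_eq_zero, ha.eq_iff]

theorem isCoprime_prod_X_sub_C_pow (ha : Function.Injective a) {u w : ι → ℕ}
    (huw : ∀ i, u i = 0 ∨ w i = 0) :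
    IsCoprime (∏ i, (X - C (a i)) ^ u i) (∏ i, (X - C (a i)) ^ w i) :=
  isCoprime_prod_pow_prod_pow (pairwise_coprime_X_sub_C ha) huw

theorem isCoprime_one_sub_C_mul_X {x y : F} (h : x ≠ y) :
    IsCoprime (1 - C x * X) (1 - C y * X) := by
  have hxy : y - x ≠ 0 := sub_ne_zero.2 h.symm
  have expand : ∀ s t : F, C s * (1 - C x * X) + C t * (1 - C y * X) =
      C (s + t) - C (s * x + t * y) * X := by
    intro s t; simp only [C_add, C_mul]; ring
  refine ⟨C (y / (y - x)), C (-x / (y - x)), ?_⟩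
  rw [expand, show y / (y - x) + -x / (y - x) = 1 by field_simp; ring,
    show y / (y - x) * x + -x / (y - x) * y = 0 by field_simp; ring, C_0, zero_mul, sub_zero,
    C_1]

theorem isCoprime_prod_one_sub_C_mul_X_pow (ha : Function.Injective a) {u w : ι → ℕ}
    (huw : ∀ i, u i = 0 ∨ w i = 0) :
    IsCoprime (∏ i, (1 - C (a i) * X) ^ u i) (∏ i, (1 - C (a i) * X) ^ w i) :=
  isCoprime_prod_pow_prod_pow (fun _ _ hij => isCoprime_one_sub_C_mul_X (ha.ne hij)) huw

theorem eval_zero_prod_one_sub_C_mul_X_pow (u : ι → ℕ) :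
    (∏ i, (1 - C (a i) * X) ^ u i).eval 0 = 1 := by
  simp [eval_prod]

theorem not_isUnit_prod_one_sub_C_mul_X_pow {u : ι → ℕ} {i : ι} (hu : u i ≠ 0)
    (ha : a i ≠ 0) :
    ¬ IsUnit (∏ j, (1 - C (a j) * X) ^ u j) := by
  intro h
  have hfac : IsUnit (1 - C (a i) * X) :=
    (isUnit_pow_iff hu).1 <| isUnit_of_dvd_unit
      (dvd_prod_of_mem (fun j => (1 - C (a j) * X) ^ u j) (mem_univ i)) h
  obtain ⟨r, -, hr⟩ := Polynomial.isUnit_iff.1 hfac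
  exact ha (by simpa [coeff_one, coeff_C] using congrArg (coeff · 1) hr)

theorem aeval_inv_X_prod_X_sub_C_pow (u : ι → ℕ) :
    aeval (RatFunc.X⁻¹ : RatFunc F) (∏ i, (X - C (a i)) ^ u i) =
      algebraMap F[X] (RatFunc F) (∏ i, (1 - C (a i) * X) ^ u i) *
        RatFunc.X⁻¹ ^ ∑ i, u i := by
  simp only [map_prod, map_pow, ← prod_pow_eq_pow_sum, ← prod_mul_distrib, ← mul_pow]
  refine prod_congr rfl fun i _ => ?_
  simp only [map_sub, map_mul, map_one, aeval_X, aeval_C, RatFunc.algebraMap_X,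
    RatFunc.algebraMap_C, sub_mul, one_mul, mul_assoc,
    mul_inv_cancel₀ (RatFunc.X_ne_zero : (RatFunc.X : RatFunc F) ≠ 0), mul_one]
  rfl

end LinearFactors

section Lagrange

variable {ι : Type*} [Fintype ι] [DecidableEq ι] {a : ι → F} {k : ι → F} {d : F}

theorem prod_erase_sub_ne_zero (ha : Function.Injective a) (i : ι) :
    ∏ j ∈ univ.erase i, (a i - a j) ≠ 0 :=
  prod_ne_zero_iff.2 fun _ hj => sub_ne_zero.2 (ha.ne (ne_of_mem_erase hj).symm)

theorem sum_mul_eval_eq_mul_coeff (ha : Function.Injective a)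
    (hk : ∀ i, k i * ∏ j ∈ univ.erase i, (a i - a j) = d) {p : F[X]}
    (hp : p.degree < Fintype.card ι) :
    ∑ i, k i * p.eval (a i) = d * p.coeff (Fintype.card ι - 1) := by
  rw [← card_univ, Lagrange.coeff_eq_sum ha.injOn (by rwa [card_univ]), mul_sum]
  refine sum_congr rfl fun i _ => ?_
  rw [← hk i]
  field_simp [prod_erase_sub_ne_zero ha i]

theorem sum_C_mul_prod_erase_X_sub_C [Nonempty ι] (ha : Function.Injective a)
    (hk : ∀ i, k i * ∏ j ∈ univ.erase i, (a i - a j) = d) :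
    ∑ i, C (k i) * ∏ j ∈ univ.erase i, (X - C (a j)) = C d := by
  have hbasis : ∀ i,
      C (k i) * ∏ j ∈ univ.erase i, (X - C (a j)) = C d * Lagrange.basis univ a i := by
    intro i
    simp only [Lagrange.basis, Lagrange.basisDivisor, prod_mul_distrib, ← map_prod,
      prod_inv_distrib, ← hk i, C_mul, ← mul_assoc]
    rw [mul_assoc (C (k i)), ← C_mul, mul_inv_cancel₀ (prod_erase_sub_ne_zero ha i), C_1,
      mul_one]
  rw [sum_congr rfl fun i _ => hbasis i, ← mul_sum, Lagrange.sum_basis ha.injOn univ_nonempty,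
    mul_one]

theorem sum_eq_zero_of_mul_prod_erase_eq (ha : Function.Injective a)
    (hk : ∀ i, k i * ∏ j ∈ univ.erase i, (a i - a j) = d) (hcard : 2 ≤ Fintype.card ι) :
    ∑ i, k i = 0 := by
  have h := sum_mul_eval_eq_mul_coeff ha hk (p := 1)
    (by rw [degree_one]; exact_mod_cast (by omega : 0 < Fintype.card ι))
  simpa [coeff_one, show Fintype.card ι - 1 ≠ 0 by omega] using h

theorem sum_mul_eq_zero_of_mul_prod_erase_eq (ha : Function.Injective a)
    (hk : ∀ i, k i * ∏ j ∈ univ.erase i, (a i - a j) = d) (hcard : 3 ≤ Fintype.card ι) :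
    ∑ i, k i * a i = 0 := by
  have h := sum_mul_eval_eq_mul_coeff ha hk (p := X)
    (by rw [degree_X]; exact_mod_cast (by omega : 1 < Fintype.card ι))
  simpa [coeff_X, show 1 ≠ Fintype.card ι - 1 by omega] using h

end Lagrange

theorem prod_erase_sub_comm {ι R : Type*} [Fintype ι] [DecidableEq ι] [CommRing R] (a : ι → R)
    (i : ι) : ∏ j ∈ univ.erase i, (a i - a j) =
      (-1) ^ (Fintype.card ι - 1) * ∏ j ∈ univ.erase i, (a j - a i) := by
  rw [← card_univ, ← card_erase_of_mem (mem_univ i), ← prod_neg]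
  simp

theorem exists_eq_and_forall_ne_mem_of_image_eq_insert {ι α : Type*} [Fintype ι] [DecidableEq α]
    {b : ι → α} (hb : Function.Injective b) {δ : α} {B : Finset α}
    (hrange : univ.image b = insert δ B) :
    ∃ i₀, b i₀ = δ ∧ ∀ i, i ≠ i₀ → b i ∈ B := by
  obtain ⟨i₀, -, hi₀⟩ := mem_image.1 (hrange ▸ mem_insert_self δ B)
  refine ⟨i₀, hi₀, fun i hi => ?_⟩
  have := hrange ▸ mem_image_of_mem b (mem_univ i)
  exact (mem_insert.1 this).resolve_left fun h => hi (hb (h.trans hi₀.symm))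

theorem natCast_toNat_sub_natCast_toNat_neg {R : Type*} [Ring R] (n : ℤ) :
    (n.toNat : R) - ((-n).toNat : R) = n := by
  have h := congrArg (Int.cast : ℤ → R) (Int.toNat_sub_toNat_neg n)
  push_cast at h
  exact h

section ZeroPoly

variable {ι : Type*} [Fintype ι] {a : ι → F} {k : ι → ℤ}

/-- The numerator of `∏ (X - aᵢ) ^ kᵢ`; its denominator is `zeroPoly a (-k)`. -/
noncomputable def zeroPoly (a : ι → F) (k : ι → ℤ) : F[X] :=
  ∏ i, (X - C (a i)) ^ (k i).toNat

/-- `X ^ (natDegree (zeroPoly a k)) * (zeroPoly a k) (1 / X)` -/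
noncomputable def zeroPolyRev (a : ι → F) (k : ι → ℤ) : F[X] :=
  ∏ i, (1 - C (a i) * X) ^ (k i).toNat

theorem zeroPoly_monic (a : ι → F) (k : ι → ℤ) : (zeroPoly a k).Monic :=
  monic_prod_of_monic _ _ fun _ _ => (monic_X_sub_C _).pow _

theorem natDegree_zeroPoly (a : ι → F) (k : ι → ℤ) :
    (zeroPoly a k).natDegree = ∑ i, (k i).toNat := by
  rw [zeroPoly, natDegree_prod_of_monic _ _ fun i _ => (monic_X_sub_C _).pow _]
  simp

theorem isCoprime_zeroPoly (ha : Function.Injective a) :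
    IsCoprime (zeroPoly a k) (zeroPoly a (-k)) :=
  isCoprime_prod_X_sub_C_pow ha fun i => by simp only [Pi.neg_apply]; omega

theorem isCoprime_zeroPolyRev (ha : Function.Injective a) :
    IsCoprime (zeroPolyRev a k) (zeroPolyRev a (-k)) :=
  isCoprime_prod_one_sub_C_mul_X_pow ha fun i => by simp only [Pi.neg_apply]; omega

theorem eval_zeroPoly_eq_zero_iff {x : F} :
    (zeroPoly a k).eval x = 0 ↔ ∃ i, 0 < k i ∧ x = a i := by
  simp only [zeroPoly, eval_prod_X_sub_C_pow_eq_zero_iff]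
  exact exists_congr fun i => and_congr_left' (by omega)

theorem rootMultiplicity_zeroPoly [DecidableEq ι] (ha : Function.Injective a) (i : ι) :
    (zeroPoly a k).rootMultiplicity (a i) = (k i).toNat :=
  rootMultiplicity_prod_X_sub_C_pow ha _ i

theorem prod_X_sub_C_zpow_eq_mk (a : ι → F) (k : ι → ℤ) :
    ∏ i, (RatFunc.X - RatFunc.C (a i)) ^ k i = RatFunc.mk (zeroPoly a k) (zeroPoly a (-k)) := by
  have hX : ∀ i, RatFunc.X - RatFunc.C (a i) = algebraMap F[X] (RatFunc F) (X - C (a i)) := by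
    simp [RatFunc.algebraMap_X, RatFunc.algebraMap_C]
  have hne : ∀ i, algebraMap F[X] (RatFunc F) (X - C (a i)) ≠ 0 := fun i =>
    RatFunc.algebraMap_ne_zero (X_sub_C_ne_zero _)
  rw [RatFunc.mk_eq_div, zeroPoly, zeroPoly, map_prod, map_prod, ← prod_div_distrib]
  refine prod_congr rfl fun i _ => ?_
  rw [hX, map_pow, map_pow, ← zpow_natCast, ← zpow_natCast, ← zpow_sub₀ (hne i),
    Pi.neg_apply, Int.toNat_sub_toNat_neg]

theorem sum_toNat_eq_sum_toNat_neg (hsum : ∑ i, k i = 0) :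
    ∑ i, (k i).toNat = ∑ i, (-k i).toNat := by
  zify
  rw [← sub_eq_zero, ← sum_sub_distrib, ← hsum]
  exact sum_congr rfl fun i _ => by omega

theorem invSub_mk_zeroPoly (ha : Function.Injective a) (hsum : ∑ i, k i = 0) :
    invSub (RatFunc.mk (zeroPoly a k) (zeroPoly a (-k))) =
      RatFunc.mk (zeroPolyRev a k) (zeroPolyRev a (-k)) := by
  rw [invSub_mk_of_monic (isCoprime_zeroPoly ha) (zeroPoly_monic a _), zeroPoly, zeroPoly,
    aeval_inv_X_prod_X_sub_C_pow, aeval_inv_X_prod_X_sub_C_pow]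
  simp only [Pi.neg_apply]
  rw [← sum_toNat_eq_sum_toNat_neg hsum,
    mul_div_mul_right _ _ (pow_ne_zero _ (inv_ne_zero RatFunc.X_ne_zero)), RatFunc.mk_eq_div]
  rfl

theorem wronskian_zeroPoly [DecidableEq ι] (hk : ∀ i, k i ≠ 0) :
    wronskian (zeroPoly a (-k)) (zeroPoly a k) =
      (∏ i, (X - C (a i)) ^ ((k i).toNat + (-k i).toNat - 1)) *
        ∑ i, C (k i : F) * ∏ j ∈ univ.erase i, (X - C (a j)) := by
  rw [zeroPoly, zeroPoly,
    wronskian_prod_pow _ fun i => by simp only [Pi.neg_apply]; have := hk i; omega]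
  congr 1
  refine sum_congr rfl fun i _ => ?_
  simp only [derivative_X_sub_C, mul_one, Pi.neg_apply, natCast_toNat_sub_natCast_toNat_neg]

theorem eval_zero_wronskian_zeroPolyRev [DecidableEq ι] (hk : ∀ i, k i ≠ 0) :
    (wronskian (zeroPolyRev a (-k)) (zeroPolyRev a k)).eval 0 = -∑ i, (k i : F) * a i := by
  rw [zeroPolyRev, zeroPolyRev,
    wronskian_prod_pow _ fun i => by simp only [Pi.neg_apply]; have := hk i; omega]
  simp only [Pi.neg_apply, eval_mul, eval_prod, eval_pow, eval_finsetSum, eval_C, eval_sub,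
    eval_one, eval_X, mul_zero, sub_zero, one_pow, prod_const_one, one_mul, mul_one,
    derivative_sub, derivative_one, derivative_C_mul, derivative_X, zero_sub, eval_neg]
  rw [← sum_neg_distrib]
  refine sum_congr rfl fun i _ => ?_
  rw [natCast_toNat_sub_natCast_toNat_neg]
  ring

end ZeroPoly

section BelyiMap

variable {ι : Type*} [Fintype ι] {a : ι → F} {k : ι → ℤ}

theorem eval_zeroPoly_neg_ne_zero_of_pos (ha : Function.Injective a) {i : ι} (hk : 0 < k i) :
    (zeroPoly a (-k)).eval (a i) ≠ 0 := by
  rw [Ne, eval_zeroPoly_eq_zero_iff]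
  rintro ⟨j, hj, hij⟩
  rw [ha hij] at hk
  simp only [Pi.neg_apply] at hj
  omega

theorem ramIdx_mk_zeroPoly_coe [DecidableEq ι] (ha : Function.Injective a) {i : ι}
    (hk : k i ≠ 0) :
    ramIdx (RatFunc.mk (zeroPoly a k) (zeroPoly a (-k))) (a i) = (k i).natAbs := by
  show ramIdxFin _ _ = _
  rcases hk.lt_or_gt with hneg | hpos
  · rw [ramIdxFin_mk_of_eval_eq_zero (isCoprime_zeroPoly ha) (zeroPoly_monic a _).ne_zero
      (eval_zeroPoly_eq_zero_iff.2 ⟨i, neg_pos.2 hneg, rfl⟩), rootMultiplicity_zeroPoly ha,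
      Pi.neg_apply]
    omega
  · have hA : (zeroPoly a k).eval (a i) = 0 := eval_zeroPoly_eq_zero_iff.2 ⟨i, hpos, rfl⟩
    rw [ramIdxFin_mk_of_eval_ne_zero (isCoprime_zeroPoly ha) (zeroPoly_monic a _).ne_zero
      (eval_zeroPoly_neg_ne_zero_of_pos ha hpos), hA, zero_div, C_0, zero_mul, sub_zero,
      rootMultiplicity_zeroPoly ha]
    omega

theorem rEval_mk_zeroPoly_coe_of_pos (ha : Function.Injective a) {i : ι} (hk : 0 < k i) :
    rEval (RatFunc.mk (zeroPoly a k) (zeroPoly a (-k))) (a i) = ((0 : F) : OnePoint F) := by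
  rw [rEval_mk_coe (isCoprime_zeroPoly ha) (zeroPoly_monic a _).ne_zero,
    if_neg (eval_zeroPoly_neg_ne_zero_of_pos ha hk),
    eval_zeroPoly_eq_zero_iff.2 ⟨i, hk, rfl⟩, zero_div]

theorem rEval_mk_zeroPoly_coe_of_neg (ha : Function.Injective a) {i : ι} (hk : k i < 0) :
    rEval (RatFunc.mk (zeroPoly a k) (zeroPoly a (-k))) (a i) = ∞ := by
  rw [rEval_mk_coe (isCoprime_zeroPoly ha) (zeroPoly_monic a _).ne_zero,
    if_pos (eval_zeroPoly_eq_zero_iff.2 ⟨i, neg_pos.2 hk, rfl⟩)]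

theorem rEval_mk_zeroPoly_infty (ha : Function.Injective a) (hsum : ∑ i, k i = 0) :
    rEval (RatFunc.mk (zeroPoly a k) (zeroPoly a (-k))) ∞ = ((1 : F) : OnePoint F) :=
  rEval_mk_infty (zeroPoly_monic a _) (zeroPoly_monic a _) (isCoprime_zeroPoly ha) (by
    rw [natDegree_zeroPoly, natDegree_zeroPoly, sum_toNat_eq_sum_toNat_neg hsum]; rfl)

theorem ramIdx_mk_zeroPoly_lt_two [DecidableEq ι] (ha : Function.Injective a)
    (hk : ∀ i, k i ≠ 0) {d : F} (hd : d ≠ 0)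
    (hL : ∑ i, C (k i : F) * ∏ j ∈ univ.erase i, (X - C (a j)) = C d) {x : F}
    (hx : ∀ i, x ≠ a i) : ramIdx (RatFunc.mk (zeroPoly a k) (zeroPoly a (-k))) x < 2 := by
  have hD : (zeroPoly a (-k)).eval x ≠ 0 := by
    rw [Ne, eval_zeroPoly_eq_zero_iff]
    rintro ⟨i, -, rfl⟩
    exact hx i rfl
  refine ramIdxFin_mk_lt_two (isCoprime_zeroPoly ha) (zeroPoly_monic a _).ne_zero hD ?_
  rw [wronskian_zeroPoly hk, hL, eval_mul, eval_C, eval_prod]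
  exact mul_ne_zero (prod_ne_zero_iff.2 fun i _ => by simp [sub_eq_zero, hx i]) hd

theorem two_le_ramIdx_mk_zeroPoly_infty [DecidableEq ι] [Nontrivial ι] (ha : Function.Injective a)
    (hk : ∀ i, k i ≠ 0) (hsum : ∑ i, k i = 0) (hsuma : ∑ i, (k i : F) * a i = 0) :
    2 ≤ ramIdx (RatFunc.mk (zeroPoly a k) (zeroPoly a (-k))) ∞ := by
  show 2 ≤ ramIdxFin _ _
  have hD0 : (zeroPolyRev a (-k)).eval 0 = 1 := eval_zero_prod_one_sub_C_mul_X_pow _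
  have hD : zeroPolyRev a (-k) ≠ 0 := fun h => by simp [h] at hD0
  have hA0 : (zeroPolyRev a k).eval 0 = 1 := eval_zero_prod_one_sub_C_mul_X_pow _
  rw [invSub_mk_zeroPoly ha hsum]
  refine two_le_ramIdxFin_mk (isCoprime_zeroPolyRev ha) hD ?_ (by simp [hD0])
    (by rw [eval_zero_wronskian_zeroPolyRev hk, hsuma, neg_zero])
  -- `f (1 / X)` is not constant: some `1 - aᵢ X` with `aᵢ ≠ 0` divides exactly one of the two
  -- coprime factors.
  intro v hv
  have hv1 : v = 1 := by simpa [hA0, hD0] using (congrArg (eval 0) hv).symm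
  rw [hv1, C_1, one_mul] at hv
  have hcop := isCoprime_zeroPolyRev ha (k := k)
  rw [hv] at hcop
  have hunitD := isCoprime_self.1 hcop
  obtain ⟨i, hai⟩ : ∃ i, a i ≠ 0 := by
    obtain ⟨i, j, hij⟩ := exists_pair_ne ι
    by_cases hi : a i = 0
    · exact ⟨j, fun hj => hij (ha (hi.trans hj.symm))⟩
    · exact ⟨i, hi⟩
  rcases (hk i).lt_or_gt with hneg | hpos
  · exact not_isUnit_prod_one_sub_C_mul_X_pow (u := fun j => ((-k) j).toNat)
      (by simp only [Pi.neg_apply]; omega) hai hunitD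
  · exact not_isUnit_prod_one_sub_C_mul_X_pow (u := fun j => (k j).toNat) (by omega) hai
      (show IsUnit (zeroPolyRev a k) from hv ▸ hunitD)

end BelyiMap

theorem branchLocus_mk_zeroPoly [CharZero F] {ι : Type*} [Fintype ι] [DecidableEq ι]
    {a : ι → F} {k : ι → ℤ} (ha : Function.Injective a) (hcard : 3 ≤ Fintype.card ι) {d : F}
    (hd : d ≠ 0) (hk : ∀ i, (k i : F) * ∏ j ∈ univ.erase i, (a i - a j) = d)
    (hk2 : ∀ i, 2 ≤ (k i).natAbs) :
    branchLocus (RatFunc.mk (zeroPoly a k) (zeroPoly a (-k))) =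
      {((0 : F) : OnePoint F), ((1 : F) : OnePoint F), ∞} := by
  have : Nontrivial ι := Fintype.one_lt_card_iff_nontrivial.1 (by omega)
  have hk0 : ∀ i, k i ≠ 0 := fun i h => by simpa [h] using hk2 i
  have hsum : ∑ i, k i = 0 := by
    exact_mod_cast sum_eq_zero_of_mul_prod_erase_eq ha hk (by omega)
  obtain ⟨ipos, -, hpos⟩ := exists_pos_of_sum_zero_of_exists_nonzero k hsum
    ⟨Classical.arbitrary ι, mem_univ _, hk0 _⟩
  obtain ⟨ineg, -, hneg⟩ := exists_pos_of_sum_zero_of_exists_nonzero (-k)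
    (by simp [hsum]) ⟨Classical.arbitrary ι, mem_univ _, by simp [hk0]⟩
  ext w
  constructor
  · rintro ⟨z, rfl, hz⟩
    cases z with
    | infty => rw [rEval_mk_zeroPoly_infty ha hsum]; simp
    | coe x =>
      by_cases hx : ∃ i, x = a i
      · obtain ⟨i, rfl⟩ := hx
        rcases (hk0 i).lt_or_gt with hi | hi
        · rw [rEval_mk_zeroPoly_coe_of_neg ha hi]; simp
        · rw [rEval_mk_zeroPoly_coe_of_pos ha hi]; simp
      · push Not at hx
        exact absurd hz (not_le.2 (ramIdx_mk_zeroPoly_lt_two ha hk0 hd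
          (sum_C_mul_prod_erase_X_sub_C ha hk) hx))
  · rintro (rfl | rfl | rfl)
    · exact ⟨a ipos, rEval_mk_zeroPoly_coe_of_pos ha hpos,
        (ramIdx_mk_zeroPoly_coe ha (hk0 ipos)).symm ▸ hk2 ipos⟩
    · exact ⟨∞, rEval_mk_zeroPoly_infty ha hsum, two_le_ramIdx_mk_zeroPoly_infty ha hk0 hsum
        (sum_mul_eq_zero_of_mul_prod_erase_eq ha hk hcard)⟩
    · exact ⟨a ineg, rEval_mk_zeroPoly_coe_of_neg ha (by simpa using hneg),
        (ramIdx_mk_zeroPoly_coe ha (hk0 ineg)).symm ▸ hk2 ineg⟩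

theorem Prime.dvd_prod_pow_iff {M : Type*} [CommMonoidWithZero M] {ι : Type*} [Fintype ι]
    {p : M} (hp : Prime p) (x : ι → M) (u : ι → ℕ) :
    p ∣ ∏ i, x i ^ u i ↔ ∃ i, u i ≠ 0 ∧ p ∣ x i := by
  rw [hp.dvd_finsetProd_iff]
  refine exists_congr fun i => ?_
  by_cases hu : u i = 0
  · simp [hu, hp.not_dvd_one]
  · simp [hu, hp.dvd_pow_iff_dvd hu]

/-- `∏ xᵢ ^ kᵢ ≠ 1`, as its `p`-adic valuation is `kᵢ₀ * v_p (xᵢ₀) ≠ 0`. -/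
theorem prod_pow_toNat_ne_prod_pow_toNat_neg {M : Type*} [CommMonoidWithZero M] {ι : Type*}
    [Fintype ι] {p : M} (hp : Prime p) {x : ι → M} {k : ι → ℤ} {i₀ : ι} (hk : k i₀ ≠ 0)
    (hdvd : p ∣ x i₀) (hndvd : ∀ i, i ≠ i₀ → ¬ p ∣ x i) :
    ∏ i, x i ^ (k i).toNat ≠ ∏ i, x i ^ (-k i).toNat := by
  have key : ∀ u : ι → ℕ, p ∣ ∏ i, x i ^ u i ↔ u i₀ ≠ 0 := fun u => by
    rw [hp.dvd_prod_pow_iff]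
    exact ⟨fun ⟨i, hu, hi⟩ => by_contra fun h => hndvd i (by rintro rfl; exact h hu) hi,
      fun hu => ⟨i₀, hu, hdvd⟩⟩
  intro h
  have := (key fun i => (k i).toNat).symm.trans (h ▸ key fun i => (-k i).toNat)
  omega

theorem eval_zeroPoly_intCast {ι : Type*} [Fintype ι] (b : ι → ℤ) (k : ι → ℤ) (x : ℤ) :
    (zeroPoly (fun i => (b i : F)) k).eval (x : F) =
      ((∏ i, (x - b i) ^ (k i).toNat : ℤ) : F) := by
  simp [zeroPoly, eval_prod]

theorem rEval_mk_zeroPoly_intCast_notMem [CharZero F] {ι : Type*} [Fintype ι] {b : ι → ℤ}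
    (hb : Function.Injective b) {k : ι → ℤ} {p : ℤ} (hp : Prime p) {β : ℤ} {i₀ : ι}
    (hk : k i₀ ≠ 0) (hβ₀ : β ≠ b i₀) (hdvd : p ∣ β - b i₀)
    (hndvd : ∀ i, i ≠ i₀ → ¬ p ∣ β - b i) :
    rEval (RatFunc.mk (zeroPoly (fun i => (b i : F)) k) (zeroPoly (fun i => (b i : F)) (-k)))
      (β : F) ∉ ({((0 : F) : OnePoint F), ((1 : F) : OnePoint F), ∞} : Set (OnePoint F)) := by
  have ha : Function.Injective fun i => (b i : F) := Int.cast_injective.comp hb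
  have hβ : ∀ i, (β : F) ≠ b i := fun i h => by
    have h : β = b i := Int.cast_injective h
    by_cases hi : i = i₀
    · exact hβ₀ (hi ▸ h)
    · exact hndvd i hi (by simp [h])
  have heval : ∀ k' : ι → ℤ, (zeroPoly (fun i => (b i : F)) k').eval (β : F) ≠ 0 := by
    intro k'
    rw [Ne, eval_zeroPoly_eq_zero_iff]
    rintro ⟨i, -, h⟩
    exact hβ i h
  have hne : (zeroPoly (fun i => (b i : F)) k).eval (β : F) ≠
      (zeroPoly (fun i => (b i : F)) (-k)).eval (β : F) := by
    rw [eval_zeroPoly_intCast, eval_zeroPoly_intCast, Ne, Int.cast_inj]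
    exact prod_pow_toNat_ne_prod_pow_toNat_neg hp hk hdvd hndvd
  rw [rEval_mk_coe (isCoprime_zeroPoly ha) (zeroPoly_monic _ _).ne_zero, if_neg (heval _)]
  simp [heval, div_eq_one_iff_eq (heval _), hne]

theorem stmt_10_general (B : Finset ℤ) (hB : 2 ≤ B.card) (β : ℤ)
    (p : ℕ) (hp : p.Prime) (hpd : ∀ γ ∈ B, ¬ ((p : ℤ) ∣ γ - β))
    (δ : ℤ) (hδ : δ = β + p)
    (m : ℕ) (b : Fin m → ℤ) (hb : Function.Injective b)
    (hrange : Finset.image b univ = insert δ B)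
    (c : ℤ) (hc : c = ∏ q ∈ (univ ×ˢ univ).filter (fun q : Fin m × Fin m => q.1 ≠ q.2),
      (b q.1 - b q.2))
    (n : Fin m → ℤ) (hn : ∀ i, n i * ∏ j ∈ univ.erase i, (b j - b i) = c)
    (f : RatFunc ℂ)
    (hf : f = ∏ i, (RatFunc.X - RatFunc.C ((b i : ℂ))) ^ (2 * n i)) :
    (∀ i, 2 ≤ ramIdx f (OnePoint.some ((b i : ℂ)))) ∧
    branchLocus f = {OnePoint.some (0 : ℂ), OnePoint.some (1 : ℂ), (∞ : OnePoint ℂ)} ∧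
    rEval f (OnePoint.some ((β : ℂ)))
      ∉ ({OnePoint.some (0 : ℂ), OnePoint.some (1 : ℂ), (∞ : OnePoint ℂ)} :
          Set (OnePoint ℂ)) := by
  have hδB : δ ∉ B := fun h => hpd δ h (by simp [hδ])
  have hm : m = B.card + 1 := by
    simpa [hrange, card_insert_of_notMem hδB] using (card_image_of_injective univ hb).symm
  obtain ⟨i₀, hi₀, hbB⟩ := exists_eq_and_forall_ne_mem_of_image_eq_insert hb hrange
  have hc0 : c ≠ 0 := hc ▸ prod_ne_zero_iff.2 fun q hq =>
    sub_ne_zero.2 fun h => (mem_filter.1 hq).2 (hb h)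
  have hn0 : ∀ i, n i ≠ 0 := fun i h => hc0 (by rw [← hn i, h, zero_mul])
  have hk0 : ∀ i, 2 * n i ≠ 0 := fun i => mul_ne_zero two_ne_zero (hn0 i)
  have hk2 : ∀ i, 2 ≤ (2 * n i).natAbs := fun i => by have := hn0 i; omega
  have hk : ∀ i, ((2 * n i : ℤ) : ℂ) * ∏ j ∈ univ.erase i, ((b i : ℂ) - b j) =
      2 * ((-1) ^ (m - 1) * c) := fun i => by
    have hsign := prod_erase_sub_comm (fun j => (b j : ℂ)) i
    rw [Fintype.card_fin] at hsign
    rw [hsign, ← hn i]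
    push_cast
    ring
  have ha : Function.Injective fun i => (b i : ℂ) := Int.cast_injective.comp hb
  rw [hf, prod_X_sub_C_zpow_eq_mk]
  refine ⟨fun i => ?_, branchLocus_mk_zeroPoly ha (by rw [Fintype.card_fin]; omega) (by simpa using hc0) hk hk2,
    rEval_mk_zeroPoly_intCast_notMem hb (Nat.prime_iff_prime_int.1 hp) (hk0 i₀)
      (by simp [hi₀, hδ, hp.ne_zero]) (by simp [hi₀, hδ])
      fun i hi h => hpd _ (hbB i hi) (dvd_sub_comm.1 h)⟩
  rw [ramIdx_mk_zeroPoly_coe ha (hk0 i)]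
  exact hk2 i

/-- Let `B ⊂ ℤ` be a finite set of integers with `|B| ≥ 2` and `β` an integer not in
`B`.  Let `p` be a prime not dividing `γ - β` for any `γ ∈ B`, set `δ = β + p` and
`B' = B ∪ {δ} = {b₁, …, b_m}`.  With `n_i` as in the partial fraction construction
(`n_i ∏_{j≠i} (b_j - b_i) = c := ∏_{i≠j} (b_i - b_j)`), the rational function
`f(x) = ∏ (x - b_i)^{2 n_i}` is ramified at every point of `B'`, has branch locus
`{0, 1, ∞}`, and satisfies `f(β) ∉ {0, 1, ∞}`. -/
theorem stmt_10 (B : Finset ℤ) (hB : 2 ≤ B.card) (β : ℤ) (hβ : β ∉ B)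
    (p : ℕ) (hp : p.Prime) (hpd : ∀ γ ∈ B, ¬ ((p : ℤ) ∣ γ - β))
    (δ : ℤ) (hδ : δ = β + p)
    (m : ℕ) (b : Fin m → ℤ) (hb : Function.Injective b)
    (hrange : Finset.image b univ = insert δ B)
    (c : ℤ) (hc : c = ∏ q ∈ (univ ×ˢ univ).filter (fun q : Fin m × Fin m => q.1 ≠ q.2),
      (b q.1 - b q.2))
    (n : Fin m → ℤ) (hn : ∀ i, n i * ∏ j ∈ univ.erase i, (b j - b i) = c)
    (f : RatFunc ℂ)
    (hf : f = ∏ i, (RatFunc.X - RatFunc.C ((b i : ℂ))) ^ (2 * n i)) :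
    (∀ i, 2 ≤ ramIdx f (OnePoint.some ((b i : ℂ)))) ∧
    branchLocus f = {OnePoint.some (0 : ℂ), OnePoint.some (1 : ℂ), (∞ : OnePoint ℂ)} ∧
    rEval f (OnePoint.some ((β : ℂ)))
      ∉ ({OnePoint.some (0 : ℂ), OnePoint.some (1 : ℂ), (∞ : OnePoint ℂ)} :
          Set (OnePoint ℂ)) :=
  stmt_10_general B hB β p hp hpd δ hδ m b hb hrange c hc n hn f hf
end

section
/- Let K be a perfect field of characteristic p > 0 and V ⊂ K̄ a finite 𝔽_p-subspace stable under Gal(K̄/K). Then T(x) := ∏_{α∈V}(x−α) is an additive polynomial with coefficients in K: T(x) = Σ_{i=0}^n a_i x^{p^i} with a_i ∈ K and a₀ ≠ 0. -/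
/-!
For `β ≠ 0` in `V`, the polynomial `S = X^p - β^(p-1) X` is additive with roots `𝔽_p β ⊆ V`, so
its fibres on `V` are cosets of `𝔽_p β` and `∏_{α ∈ V} (X - α) = (∏_{γ ∈ S(V)} (X - γ)) ∘ S`.
By induction on `|V|` the product is therefore a composite of polynomials `∑ aᵢ X^(pⁱ)`, hence
itself of this form and additive. Galois stability of `V` makes its coefficients Galois-invariant,
so they lie in `K` (`K̄/K` is Galois as `K` is perfect), and `a₀ ≠ 0` because `0` is a simple root.
-/

open Polynomial

namespace Polynomial

noncomputable def linearizedPolynomials (R : Type*) [CommRing R] (p : ℕ) : Submodule R R[X] :=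
  Submodule.span R (Set.range fun i : ℕ => (X : R[X]) ^ p ^ i)

section Linearized

variable {R : Type*} [CommRing R] {p : ℕ} {f g : R[X]}

theorem X_pow_pow_mem_linearizedPolynomials (i : ℕ) :
    (X : R[X]) ^ p ^ i ∈ linearizedPolynomials R p :=
  Submodule.subset_span ⟨i, rfl⟩

theorem X_pow_sub_C_mul_X_mem_linearizedPolynomials (c : R) :
    X ^ p - C c * X ∈ linearizedPolynomials R p := by
  rw [← smul_eq_C_mul]
  refine Submodule.sub_mem _ ?_ (Submodule.smul_mem _ c ?_)
  · simpa using X_pow_pow_mem_linearizedPolynomials (R := R) (p := p) 1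
  · simpa using X_pow_pow_mem_linearizedPolynomials (R := R) (p := p) 0

theorem exists_pow_eq_of_mem_linearizedPolynomials (hf : f ∈ linearizedPolynomials R p) :
    ∀ n ∈ f.support, ∃ i, p ^ i = n := by
  induction hf using Submodule.span_induction with
  | mem _ h =>
    obtain ⟨i, rfl⟩ := h
    intro n hn
    dsimp only at hn
    rw [← monomial_one_right_eq_X_pow] at hn
    exact ⟨i, (Finset.mem_singleton.1 (support_monomial_subset _ _ hn)).symm⟩
  | zero => simp
  | add f g _ _ hf hg =>
    intro n hn
    rcases Finset.mem_union.1 (support_add hn) with hn | hn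
    exacts [hf n hn, hg n hn]
  | smul c f _ hf => exact fun n hn => hf n (support_smul c f hn)

theorem eq_sum_of_mem_linearizedPolynomials (hp : 1 < p) (hf : f ∈ linearizedPolynomials R p) :
    f = ∑ i ∈ Finset.range (f.natDegree + 1), C (f.coeff (p ^ i)) * X ^ p ^ i := by
  have hsupp : f.support ⊆ (Finset.range (f.natDegree + 1)).image (p ^ ·) := by
    intro n hn
    obtain ⟨i, rfl⟩ := exists_pow_eq_of_mem_linearizedPolynomials hf n hn
    refine Finset.mem_image_of_mem _ (Finset.mem_range_succ_iff.2 ?_)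
    exact (Nat.lt_pow_self hp).le.trans (le_natDegree_of_mem_supp _ hn)
  conv_lhs => rw [as_sum_support_C_mul_X_pow f]
  rw [Finset.sum_subset hsupp fun n _ hn => by rw [notMem_support_iff.1 hn, C_0, zero_mul],
    Finset.sum_image fun i _ j _ h => Nat.pow_right_injective hp h]

variable [ExpChar R p]

theorem pow_expChar_pow_mem_linearizedPolynomials (hf : f ∈ linearizedPolynomials R p) (k : ℕ) :
    f ^ p ^ k ∈ linearizedPolynomials R p := by
  induction hf using Submodule.span_induction with
  | mem _ h =>
    obtain ⟨i, rfl⟩ := h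
    rw [← pow_mul, ← pow_add]
    exact X_pow_pow_mem_linearizedPolynomials _
  | zero => rw [zero_pow (expChar_pow_pos R p k).ne']; exact Submodule.zero_mem _
  | add f g _ _ hf hg => rw [add_pow_expChar_pow]; exact Submodule.add_mem _ hf hg
  | smul c f _ hf => rw [_root_.smul_pow]; exact Submodule.smul_mem _ _ hf

theorem comp_mem_linearizedPolynomials (hf : f ∈ linearizedPolynomials R p)
    (hg : g ∈ linearizedPolynomials R p) : f.comp g ∈ linearizedPolynomials R p := by
  induction hf using Submodule.span_induction with
  | mem _ h =>
    obtain ⟨i, rfl⟩ := h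
    rw [X_pow_comp]
    exact pow_expChar_pow_mem_linearizedPolynomials hg i
  | zero => simp
  | add f g _ _ hf hg => rw [add_comp]; exact Submodule.add_mem _ hf hg
  | smul c f _ hf => rw [smul_comp]; exact Submodule.smul_mem _ _ hf

theorem eval_add_of_mem_linearizedPolynomials (hf : f ∈ linearizedPolynomials R p) (x y : R) :
    f.eval (x + y) = f.eval x + f.eval y := by
  induction hf using Submodule.span_induction with
  | mem _ h =>
    obtain ⟨i, rfl⟩ := h
    simp [add_pow_expChar_pow]
  | zero => simp
  | add f g _ _ hf hg => simp only [eval_add, hf, hg]; ring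
  | smul c f _ hf => simp only [eval_smul, hf, smul_add]

end Linearized

theorem prod_X_sub_C_eq_of_monic_of_natDegree_le {R : Type*} [CommRing R] [IsDomain R] {f : R[X]}
    (hf : f.Monic) {s : Finset R} (hs : ∀ a ∈ s, f.IsRoot a) (hcard : f.natDegree ≤ s.card) :
    ∏ a ∈ s, (X - C a) = f := by
  have hle : s.val ≤ f.roots :=
    (Multiset.le_iff_subset s.nodup).2 fun a ha => (mem_roots hf.ne_zero).2 (hs a ha)
  have hroots : s.val = f.roots :=
    Multiset.eq_of_le_of_card_le hle ((card_roots' f).trans hcard)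
  have hcard_roots : f.roots.card = f.natDegree :=
    le_antisymm (card_roots' f) (hroots ▸ hcard)
  rw [Finset.prod_eq_multiset_prod, hroots]
  exact prod_multiset_X_sub_C_of_monic_of_roots_card_eq hf hcard_roots

theorem coeff_one_prod_X_sub_C_ne_zero {R : Type*} [CommRing R] [IsDomain R] {s : Finset R}
    (hs : 0 ∈ s) : (∏ a ∈ s, (X - C a)).coeff 1 ≠ 0 := by
  classical
  rw [← Finset.mul_prod_erase s _ hs, C_0, sub_zero, coeff_X_mul, coeff_zero_eq_eval_zero,
    eval_prod, Finset.prod_ne_zero_iff]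
  intro a ha
  simpa [sub_eq_zero, eq_comm] using Finset.ne_of_mem_erase ha

theorem map_prod_X_sub_C_of_mapsTo {L : Type*} [Field L] (σ : L →+* L) {s : Finset L}
    (hs : ∀ a ∈ s, σ a ∈ s) : (∏ a ∈ s, (X - C a)).map σ = ∏ a ∈ s, (X - C a) := by
  classical
  have himage : s.image σ = s := Finset.eq_of_subset_of_card_le (Finset.image_subset_iff.2 hs)
    (Finset.card_image_of_injective _ σ.injective).ge
  simp only [Polynomial.map_prod, Polynomial.map_sub, map_X, map_C]
  conv_rhs => rw [← himage]
  rw [Finset.prod_image σ.injective.injOn]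

section Subspace

variable {L : Type*} [Field L] {p : ℕ}

/-- `∏_{k ∈ 𝔽_p} (X - k β)` in closed form. -/
noncomputable def linePolynomial (p : ℕ) (β : L) : L[X] := X ^ p - C (β ^ (p - 1)) * X

theorem linePolynomial_mem_linearizedPolynomials (β : L) :
    linePolynomial p β ∈ linearizedPolynomials L p :=
  X_pow_sub_C_mul_X_mem_linearizedPolynomials _

theorem eval_linePolynomial_self (hp : 0 < p) (β : L) : (linePolynomial p β).eval β = 0 := by
  rw [linePolynomial, eval_sub, eval_mul, eval_C, eval_X, eval_X_pow, ← pow_succ,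
    Nat.sub_add_cancel hp, sub_self]

theorem monic_linePolynomial_sub_C (hp : 1 < p) (β γ : L) :
    (linePolynomial p β - C γ).Monic := by
  unfold linePolynomial
  monicity!
  simp [hp.le, hp.not_ge]

theorem natDegree_linePolynomial_sub_C (hp : 1 < p) (β γ : L) :
    (linePolynomial p β - C γ).natDegree = p := by
  unfold linePolynomial
  compute_degree!
  all_goals simp [hp.ne', (zero_lt_one.trans hp).ne', hp.le]

variable [Fact p.Prime] [CharP L p] {V : Finset L}

theorem prod_filter_eval_linePolynomial_eq [DecidableEq L] (hV : ∀ x ∈ V, ∀ y ∈ V, x + y ∈ V)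
    {α β : L} (hα : α ∈ V) (hβ : β ∈ V) (hβ0 : β ≠ 0) :
    ∏ a ∈ V with (linePolynomial p β).eval a = (linePolynomial p β).eval α, (X - C a) =
      linePolynomial p β - C ((linePolynomial p β).eval α) := by
  set S := linePolynomial p β
  have hp := (Fact.out : p.Prime).one_lt
  have hSadd :=
    eval_add_of_mem_linearizedPolynomials (linePolynomial_mem_linearizedPolynomials (p := p) β)
  have hcoset : ∀ k : ℕ, α + k • β ∈ V ∧ S.eval (α + k • β) = S.eval α := by
    intro k
    induction k with
    | zero => simpa using hα
    | succ k ih =>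
      rw [succ_nsmul, ← add_assoc, hSadd, eval_linePolynomial_self (zero_lt_one.trans hp),
        add_zero]
      exact ⟨hV _ ih.1 _ hβ, ih.2⟩
  have hinj : Set.InjOn (fun k : ℕ => α + k • β) (Finset.range p) := by
    intro k hk l hl hkl
    rw [add_right_inj, nsmul_eq_mul, nsmul_eq_mul, mul_left_inj' hβ0] at hkl
    exact CharP.natCast_injOn_Iio L p (by simpa using hk) (by simpa using hl) hkl
  refine prod_X_sub_C_eq_of_monic_of_natDegree_le (monic_linePolynomial_sub_C hp β _) ?_ ?_
  · intro a ha
    rw [IsRoot, eval_sub, eval_C, sub_eq_zero]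
    exact (Finset.mem_filter.1 ha).2
  · rw [natDegree_linePolynomial_sub_C hp]
    calc p = ((Finset.range p).image fun k : ℕ => α + k • β).card := by
          rw [Finset.card_image_of_injOn hinj, Finset.card_range]
      _ ≤ _ := Finset.card_le_card fun a ha => by
          obtain ⟨k, -, rfl⟩ := Finset.mem_image.1 ha
          exact Finset.mem_filter.2 (hcoset k)

theorem prod_X_sub_C_eq_comp_linePolynomial [DecidableEq L] (hV : ∀ x ∈ V, ∀ y ∈ V, x + y ∈ V)
    {β : L} (hβ : β ∈ V) (hβ0 : β ≠ 0) :
    ∏ a ∈ V, (X - C a) =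
      (∏ γ ∈ V.image (linePolynomial p β).eval, (X - C γ)).comp (linePolynomial p β) := by
  rw [prod_comp, ← Finset.prod_fiberwise_of_maps_to
    fun a ha => Finset.mem_image_of_mem (linePolynomial p β).eval ha]
  refine Finset.prod_congr rfl fun γ hγ => ?_
  obtain ⟨α, hα, rfl⟩ := Finset.mem_image.1 hγ
  rw [prod_filter_eval_linePolynomial_eq hV hα hβ hβ0, sub_comp, X_comp, C_comp]

theorem prod_X_sub_C_mem_linearizedPolynomials (V : Finset L) (hV0 : 0 ∈ V)
    (hV : ∀ x ∈ V, ∀ y ∈ V, x + y ∈ V) : ∏ a ∈ V, (X - C a) ∈ linearizedPolynomials L p := by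
  classical
  induction h : V.card using Nat.strong_induction_on generalizing V with
  | _ n ih =>
  by_cases hzero : ∀ x ∈ V, x = 0
  · rw [Finset.eq_singleton_iff_unique_mem.2 ⟨hV0, hzero⟩, Finset.prod_singleton, C_0, sub_zero]
    simpa using X_pow_pow_mem_linearizedPolynomials (R := L) (p := p) 0
  obtain ⟨β, hβ, hβ0⟩ := not_forall₂.1 hzero
  set φ := (linePolynomial p β).eval
  have hφ :=
    eval_add_of_mem_linearizedPolynomials (linePolynomial_mem_linearizedPolynomials (p := p) β)
  have hφ0 : φ 0 = 0 := by simpa using hφ 0 0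
  have hcard : (V.image φ).card < n := by
    refine h ▸ Finset.card_image_le.lt_of_ne fun hinj => hβ0 ?_
    refine Finset.card_image_iff.1 hinj hβ hV0 ?_
    rw [hφ0]
    exact eval_linePolynomial_self (Fact.out : p.Prime).pos β
  have hW0 : 0 ∈ V.image φ := hφ0 ▸ Finset.mem_image_of_mem φ hV0
  have hW : ∀ x ∈ V.image φ, ∀ y ∈ V.image φ, x + y ∈ V.image φ := by
    simp only [Finset.mem_image]
    rintro _ ⟨x, hx, rfl⟩ _ ⟨y, hy, rfl⟩
    exact ⟨x + y, hV x hx y hy, hφ x y⟩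
  rw [prod_X_sub_C_eq_comp_linePolynomial hV hβ hβ0]
  exact comp_mem_linearizedPolynomials (ih _ hcard _ hW0 hW rfl)
    (linePolynomial_mem_linearizedPolynomials β)

end Subspace

theorem mem_lifts_of_forall_map_algEquiv_eq {K L : Type*} [Field K] [Field L] [Algebra K L]
    [IsGalois K L] {f : L[X]} (hf : ∀ σ : L ≃ₐ[K] L, f.map (σ : L →+* L) = f) :
    f ∈ lifts (algebraMap K L) := by
  refine (lifts_iff_coeff_lifts f).2 fun n => ?_
  refine (InfiniteGalois.mem_range_algebraMap_iff_fixed _).2 fun σ => ?_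
  conv_rhs => rw [← hf σ]
  rw [coeff_map]
  rfl

end Polynomial

theorem stmt_12_general (K : Type) [Field K] [PerfectField K] (p : ℕ) [Fact p.Prime] [CharP K p]
    (V : Finset (AlgebraicClosure K))
    (hzero : (0 : AlgebraicClosure K) ∈ V)
    (hadd : ∀ x ∈ V, ∀ y ∈ V, x + y ∈ V)
    (hgal : ∀ σ : AlgebraicClosure K ≃ₐ[K] AlgebraicClosure K, ∀ x ∈ V, σ x ∈ V)
    (T : (AlgebraicClosure K)[X]) (hT : T = ∏ α ∈ V, (X - C α)) :
    (∀ x y : AlgebraicClosure K, T.eval (x + y) = T.eval x + T.eval y) ∧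
    ∃ (n : ℕ) (a : Fin (n + 1) → K), a 0 ≠ 0 ∧
      T = ∑ i : Fin (n + 1), C (algebraMap K (AlgebraicClosure K) (a i)) * X ^ (p ^ (i : ℕ)) := by
  have hTmem : T ∈ linearizedPolynomials _ p :=
    hT ▸ prod_X_sub_C_mem_linearizedPolynomials V hzero hadd
  obtain ⟨g, hg⟩ := (mem_lifts T).1 <| mem_lifts_of_forall_map_algEquiv_eq fun σ =>
    hT ▸ map_prod_X_sub_C_of_mapsTo _ (hgal σ)
  refine ⟨eval_add_of_mem_linearizedPolynomials hTmem, T.natDegree,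
    fun i => g.coeff (p ^ (i : ℕ)), ?_, ?_⟩
  · intro h
    apply hT ▸ coeff_one_prod_X_sub_C_ne_zero hzero
    simpa [← hg, coeff_map] using h
  · conv_lhs => rw [eq_sum_of_mem_linearizedPolynomials (Fact.out : p.Prime).one_lt hTmem]
    rw [← Fin.sum_univ_eq_sum_range fun i => C (T.coeff (p ^ i)) * X ^ p ^ i]
    simp [← hg, coeff_map]

/-- Let `K` be a perfect field of characteristic `p > 0` and `V ⊂ K̄` a finite
`𝔽_p`-subspace (equivalently, in characteristic `p`, a finite additive subgroup)
stable under `Gal(K̄/K)`.  Then `T(x) := ∏_{α∈V} (x - α)` is an additive polynomial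
with coefficients in `K`: `T(x) = ∑_{i=0}^n a_i x^{p^i}` with `a_i ∈ K` and `a₀ ≠ 0`. -/
theorem stmt_12 (K : Type) [Field K] [PerfectField K] (p : ℕ) [Fact p.Prime] [CharP K p]
    (V : Finset (AlgebraicClosure K))
    (hzero : (0 : AlgebraicClosure K) ∈ V)
    (hadd : ∀ x ∈ V, ∀ y ∈ V, x + y ∈ V)
    (hneg : ∀ x ∈ V, -x ∈ V)
    (hgal : ∀ σ : AlgebraicClosure K ≃ₐ[K] AlgebraicClosure K, ∀ x ∈ V, σ x ∈ V)
    (T : (AlgebraicClosure K)[X]) (hT : T = ∏ α ∈ V, (X - C α)) :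
    (∀ x y : AlgebraicClosure K, T.eval (x + y) = T.eval x + T.eval y) ∧
    ∃ (n : ℕ) (a : Fin (n + 1) → K), a 0 ≠ 0 ∧
      T = ∑ i : Fin (n + 1), C (algebraMap K (AlgebraicClosure K) (a i)) * X ^ (p ^ (i : ℕ)) :=
  stmt_12_general K p V hzero hadd hgal T hT
end

section
/- Let K be a perfect field of characteristic p > 0, T(x) = Σ_{i=0}^n a_i x^{p^i} ∈ K[x] with a₀ ≠ 0, and S(x) = T(x)^p / x^p = Σ a_i^p x^{p(p^i−1)}. Define g(x) = x^p + 1/(T(x) + S(x)). Then g′(x) = −a₀/(T(x)+S(x))², so g has no finite critical points other than poles, and the branch locus of g: ℙ¹ → ℙ¹ is contained in {∞}. -/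
/-!
In characteristic `p` both `X ^ p` and `S` have zero derivative while `T' = a₀`, so
`Q = T + S` has constant derivative `a₀ ≠ 0`. In lowest terms `g = (X ^ p Q + 1) / Q`, and the
Wronskian `num' * denom - num * denom'` of this representation is the nonzero constant `-a₀`
(up to a unit). Hence `g - g(x)` has a simple zero at every finite point `x` that is not a pole,
so ramification can only occur over `∞`: at the poles, and at `∞` itself since
`deg num > deg denom`.
-/

open Polynomial Finset OnePoint
open scoped Classical

variable {F : Type*} [Field F]

/-- The (formal) derivative of a rational function. -/
noncomputable def rDeriv (f : RatFunc F) : RatFunc F :=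
  algebraMap F[X] (RatFunc F) (derivative f.num * f.denom - f.num * derivative f.denom) /
    algebraMap F[X] (RatFunc F) (f.denom ^ 2)

/-- Base change of rational functions along a field embedding. -/
noncomputable def ratFuncMap {K L : Type*} [Field K] [Field L] (φ : K →+* L) :
    RatFunc K →+* RatFunc L :=
  RatFunc.mapRingHom (Polynomial.mapRingHom φ) (by
    intro x hx
    simp only [Submonoid.mem_comap, Polynomial.coe_mapRingHom]
    rw [mem_nonZeroDivisors_iff_ne_zero] at hx ⊢
    exact (Polynomial.map_ne_zero_iff φ.injective).mpr hx)

section Polynomial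

variable {L : Type*} [Field L]

theorem rootMultiplicity_sub_C_div_mul_le_one {P Q : L[X]} {x : L} (hQx : Q.eval x ≠ 0)
    (hW : (derivative P * Q - P * derivative Q).eval x ≠ 0) :
    (P - C (P.eval x / Q.eval x) * Q).rootMultiplicity x ≤ 1 := by
  set h := P - C (P.eval x / Q.eval x) * Q
  have hder : (derivative h).eval x * Q.eval x = (derivative P * Q - P * derivative Q).eval x := by
    simp only [h, derivative_sub, derivative_C_mul, eval_sub, eval_mul, eval_C]
    field_simp
  have hder0 : ¬(derivative h).IsRoot x := fun hr => hW (by rw [← hder, hr.eq_zero, zero_mul])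
  have hh0 : h ≠ 0 := fun h0 => hder0 (by simp [h0])
  rw [← not_lt, one_lt_rootMultiplicity_iff_isRoot hh0]
  exact fun hr => hder0 hr.2

theorem gcd_eq_one_of_isCoprime {P Q : L[X]} (h : IsCoprime P Q) : gcd P Q = 1 := by
  rw [← _root_.normalize_gcd, normalize_eq_one]
  exact (gcd_isUnit_iff P Q).mpr h

end Polynomial

section RationalFunctions

variable {L : Type*} [Field L]

theorem RatFunc.num_div_of_isCoprime {P Q : L[X]} (h : IsCoprime P Q) :
    (algebraMap L[X] (RatFunc L) P / algebraMap L[X] (RatFunc L) Q).num =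
      Polynomial.C Q.leadingCoeff⁻¹ * P := by
  simp [gcd_eq_one_of_isCoprime h, EuclideanDomain.div_one]

theorem RatFunc.denom_div_of_isCoprime {P Q : L[X]} (hQ : Q ≠ 0) (h : IsCoprime P Q) :
    (algebraMap L[X] (RatFunc L) P / algebraMap L[X] (RatFunc L) Q).denom =
      Polynomial.C Q.leadingCoeff⁻¹ * Q := by
  simp [hQ, gcd_eq_one_of_isCoprime h, EuclideanDomain.div_one]

theorem RatFunc.wronskian_num_denom_div_of_isCoprime {P Q : L[X]} (hQ : Q ≠ 0)
    (h : IsCoprime P Q) :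
    let f := algebraMap L[X] (RatFunc L) P / algebraMap L[X] (RatFunc L) Q
    derivative f.num * f.denom - f.num * derivative f.denom =
      Polynomial.C (Q.leadingCoeff⁻¹ ^ 2) * (derivative P * Q - P * derivative Q) := by
  simp only [num_div_of_isCoprime h, denom_div_of_isCoprime hQ h, derivative_C_mul, C_pow]
  ring

theorem rDeriv_div_of_isCoprime {P Q : L[X]} (hQ : Q ≠ 0) (h : IsCoprime P Q) :
    rDeriv (algebraMap L[X] (RatFunc L) P / algebraMap L[X] (RatFunc L) Q) =
      algebraMap L[X] (RatFunc L) (derivative P * Q - P * derivative Q) /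
        algebraMap L[X] (RatFunc L) (Q ^ 2) := by
  have hc : algebraMap L[X] (RatFunc L) (C (Q.leadingCoeff⁻¹ ^ 2)) ≠ 0 := by
    simpa using leadingCoeff_ne_zero.mpr hQ
  rw [rDeriv, RatFunc.wronskian_num_denom_div_of_isCoprime hQ h,
    RatFunc.denom_div_of_isCoprime hQ h, mul_pow, ← C_pow, map_mul, map_mul,
    mul_div_mul_left _ _ hc]

theorem ramIdxFin_le_one {f : RatFunc L} {x : L} (hx : f.denom.eval x ≠ 0)
    (hW : (derivative f.num * f.denom - f.num * derivative f.denom).eval x ≠ 0) :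
    ramIdxFin f x ≤ 1 := by
  rw [ramIdxFin, if_neg hx]
  exact rootMultiplicity_sub_C_div_mul_le_one hx hW

theorem rEval_eq_infty_of_two_le_ramIdx {f : RatFunc L}
    (hW : ∀ x, f.denom.eval x ≠ 0 →
      (derivative f.num * f.denom - f.num * derivative f.denom).eval x ≠ 0)
    {x : L} (hx : 2 ≤ ramIdx f x) : rEval f x = ∞ := by
  have hpole : f.denom.eval x = 0 := by
    by_contra hx0
    have : ramIdx f x ≤ 1 := ramIdxFin_le_one hx0 (hW x hx0)
    omega
  exact if_pos hpole

theorem branchLocus_subset_infty {f : RatFunc L} (hdeg : f.denom.degree < f.num.degree)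
    (hfin : ∀ x : L, 2 ≤ ramIdx f x → rEval f x = ∞) : branchLocus f ⊆ {∞} := by
  rintro w ⟨a, rfl, ha⟩
  induction a using OnePoint.rec with
  | infty => exact if_pos hdeg
  | coe x => exact hfin x ha

end RationalFunctions

section XPowAddInv

variable {L : Type*} [Field L] {m : ℕ} {Q : L[X]} {b : L}

theorem X_pow_add_inv_eq_div (hQ : Q ≠ 0) :
    algebraMap L[X] (RatFunc L) (X ^ m) + (algebraMap L[X] (RatFunc L) Q)⁻¹ =
      algebraMap L[X] (RatFunc L) (X ^ m * Q + 1) / algebraMap L[X] (RatFunc L) Q := by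
  have : algebraMap L[X] (RatFunc L) Q ≠ 0 := by simpa using hQ
  rw [map_add, map_mul, map_one]
  field_simp

theorem isCoprime_X_pow_mul_add_one (m : ℕ) (Q : L[X]) : IsCoprime (X ^ m * Q + 1) Q :=
  ⟨1, -X ^ m, by ring⟩

theorem wronskian_X_pow_mul_add_one (hXm : derivative (X ^ m : L[X]) = 0)
    (hQ' : derivative Q = C b) :
    derivative (X ^ m * Q + 1) * Q - (X ^ m * Q + 1) * derivative Q = -C b := by
  rw [derivative_add, derivative_mul, hXm, hQ', derivative_one]
  ring

theorem rDeriv_X_pow_add_inv (hQ : Q ≠ 0) (hXm : derivative (X ^ m : L[X]) = 0)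
    (hQ' : derivative Q = C b) :
    rDeriv (algebraMap L[X] (RatFunc L) (X ^ m) + (algebraMap L[X] (RatFunc L) Q)⁻¹) =
      -algebraMap L[X] (RatFunc L) (C b) / algebraMap L[X] (RatFunc L) Q ^ 2 := by
  rw [X_pow_add_inv_eq_div hQ, rDeriv_div_of_isCoprime hQ (isCoprime_X_pow_mul_add_one m Q),
    wronskian_X_pow_mul_add_one hXm hQ', map_neg, map_pow]

theorem degree_denom_lt_degree_num_X_pow_add_inv (hm : 0 < m) (hQ : Q ≠ 0) :
    let f := algebraMap L[X] (RatFunc L) (X ^ m) + (algebraMap L[X] (RatFunc L) Q)⁻¹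
    f.denom.degree < f.num.degree := by
  have hc : Q.leadingCoeff⁻¹ ≠ 0 := inv_ne_zero (leadingCoeff_ne_zero.mpr hQ)
  have hlt : Q.degree < (X ^ m * Q).degree := by
    rw [degree_mul, degree_X_pow, degree_eq_natDegree hQ]
    exact_mod_cast (by omega : Q.natDegree < m + Q.natDegree)
  have hone : (1 : L[X]).degree < (X ^ m * Q).degree :=
    lt_of_le_of_lt (by simpa using zero_le_degree_iff.mpr hQ) hlt
  simp only [X_pow_add_inv_eq_div hQ, RatFunc.num_div_of_isCoprime (isCoprime_X_pow_mul_add_one m Q),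
    RatFunc.denom_div_of_isCoprime hQ (isCoprime_X_pow_mul_add_one m Q), degree_C_mul hc,
    degree_add_eq_left_of_degree_lt hone]
  exact hlt

theorem wronskian_num_denom_X_pow_add_inv_ne_zero (hQ : Q ≠ 0) (hb : b ≠ 0)
    (hXm : derivative (X ^ m : L[X]) = 0) (hQ' : derivative Q = C b) (x : L) :
    let f := algebraMap L[X] (RatFunc L) (X ^ m) + (algebraMap L[X] (RatFunc L) Q)⁻¹
    (derivative f.num * f.denom - f.num * derivative f.denom).eval x ≠ 0 := by
  simp only [X_pow_add_inv_eq_div hQ,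
    RatFunc.wronskian_num_denom_div_of_isCoprime hQ (isCoprime_X_pow_mul_add_one m Q),
    wronskian_X_pow_mul_add_one hXm hQ', eval_mul, eval_neg, eval_C]
  simp [hb, leadingCoeff_ne_zero.mpr hQ]

end XPowAddInv

theorem ratFuncMap_algebraMap {K L : Type*} [Field K] [Field L] (φ : K →+* L) (q : K[X]) :
    ratFuncMap φ (algebraMap K[X] (RatFunc K) q) = algebraMap L[X] (RatFunc L) (q.map φ) := by
  rw [← div_one (algebraMap K[X] (RatFunc K) q), ← map_one (algebraMap K[X] (RatFunc K)),
    ratFuncMap, RatFunc.coe_mapRingHom_eq_coe_map, RatFunc.map_apply_div]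
  simp

section AdditivePolynomials

variable {K : Type*} [Field K] {p : ℕ}

theorem derivative_sum_C_mul_X_pow_mul_char [CharP K p] {ι : Type*} (s : Finset ι) (c : ι → K)
    (e : ι → ℕ) : derivative (∑ i ∈ s, C (c i) * X ^ (p * e i)) = 0 := by
  simp [derivative_X_pow]

theorem derivative_sum_C_mul_X_pow_pow [CharP K p] {n : ℕ} (a : Fin (n + 1) → K) :
    derivative (∑ i : Fin (n + 1), C (a i) * X ^ (p ^ (i : ℕ))) = C (a 0) := by
  simp only [Fin.sum_univ_succ, Fin.val_succ, pow_succ', derivative_add,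
    derivative_sum_C_mul_X_pow_mul_char]
  simp

theorem eval_zero_sum_C_mul_X_pow_pow (hp : p ≠ 0) {n : ℕ} (a : Fin (n + 1) → K) :
    (∑ i : Fin (n + 1), C (a i) * X ^ (p ^ (i : ℕ))).eval 0 = 0 := by
  simp [eval_finsetSum, hp]

theorem eval_zero_sum_C_pow_mul_X_pow_mul_pow_sub_one (hp : 1 < p) {n : ℕ}
    (a : Fin (n + 1) → K) :
    (∑ i : Fin (n + 1), C (a i ^ p) * X ^ (p * (p ^ (i : ℕ) - 1))).eval 0 = a 0 ^ p := by
  have hexp (i : ℕ) : p * (p ^ (i + 1) - 1) ≠ 0 :=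
    Nat.mul_ne_zero (by omega) (Nat.sub_ne_zero_of_lt (Nat.one_lt_pow (by simp) hp))
  simp [eval_finsetSum, Fin.sum_univ_succ, hexp]

end AdditivePolynomials

theorem stmt_13_general (K : Type) [Field K] (p : ℕ) [Fact p.Prime] [CharP K p]
    (n : ℕ) (a : Fin (n + 1) → K) (ha : a 0 ≠ 0)
    (T S : K[X])
    (hT : T = ∑ i : Fin (n + 1), C (a i) * X ^ (p ^ (i : ℕ)))
    (hS : S = ∑ i : Fin (n + 1), C ((a i) ^ p) * X ^ (p * (p ^ (i : ℕ) - 1)))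
    (g : RatFunc K)
    (hg : g = algebraMap K[X] (RatFunc K) (X ^ p) +
      (algebraMap K[X] (RatFunc K) (T + S))⁻¹) :
    rDeriv g = - (algebraMap K[X] (RatFunc K) (C (a 0))) /
        (algebraMap K[X] (RatFunc K) (T + S)) ^ 2 ∧
    (∀ x : AlgebraicClosure K,
      2 ≤ ramIdx (ratFuncMap (algebraMap K (AlgebraicClosure K)) g) (OnePoint.some x) →
      rEval (ratFuncMap (algebraMap K (AlgebraicClosure K)) g) (OnePoint.some x)
        = (∞ : OnePoint (AlgebraicClosure K))) ∧
    branchLocus (ratFuncMap (algebraMap K (AlgebraicClosure K)) g)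
      ⊆ {(∞ : OnePoint (AlgebraicClosure K))} := by
  have hp : p.Prime := Fact.out
  have hXp : derivative (X ^ p : K[X]) = 0 := by simp [derivative_X_pow]
  have hQ' : derivative (T + S) = C (a 0) := by
    rw [derivative_add, hT, hS, derivative_sum_C_mul_X_pow_pow, derivative_sum_C_mul_X_pow_mul_char,
      add_zero]
  have hQ0 : T + S ≠ 0 := by
    have heval : (T + S).eval 0 = a 0 ^ p := by
      rw [eval_add, hT, hS, eval_zero_sum_C_mul_X_pow_pow hp.ne_zero,
        eval_zero_sum_C_pow_mul_X_pow_mul_pow_sub_one hp.one_lt, zero_add]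
    exact fun h => ha (pow_eq_zero_iff hp.ne_zero |>.mp (by rw [← heval, h, eval_zero]))
  set φ := algebraMap K (AlgebraicClosure K)
  have hgφ : ratFuncMap φ g =
      algebraMap (AlgebraicClosure K)[X] (RatFunc (AlgebraicClosure K)) (X ^ p) +
        (algebraMap (AlgebraicClosure K)[X] (RatFunc (AlgebraicClosure K)) ((T + S).map φ))⁻¹ := by
    rw [hg, map_add, map_inv₀, ratFuncMap_algebraMap, ratFuncMap_algebraMap, Polynomial.map_pow,
      Polynomial.map_X]
  have hQφ0 : (T + S).map φ ≠ 0 := (Polynomial.map_ne_zero_iff φ.injective).mpr hQ0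
  have hXpφ : derivative (X ^ p : (AlgebraicClosure K)[X]) = 0 := by
    rw [← Polynomial.map_X φ, ← Polynomial.map_pow, derivative_map, hXp, Polynomial.map_zero]
  have hQφ' : derivative ((T + S).map φ) = C (φ (a 0)) := by
    rw [derivative_map, hQ', Polynomial.map_C]
  have hfin (x : AlgebraicClosure K) (hx : 2 ≤ ramIdx (ratFuncMap φ g) x) :
      rEval (ratFuncMap φ g) x = ∞ := by
    rw [hgφ] at hx ⊢
    exact rEval_eq_infty_of_two_le_ramIdx (fun y _ => wronskian_num_denom_X_pow_add_inv_ne_zero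
      hQφ0 ((map_ne_zero φ).mpr ha) hXpφ hQφ' y) hx
  refine ⟨hg ▸ rDeriv_X_pow_add_inv hQ0 hXp hQ', hfin, ?_⟩
  rw [hgφ] at hfin ⊢
  exact branchLocus_subset_infty (degree_denom_lt_degree_num_X_pow_add_inv hp.pos hQφ0) hfin

/-- Let `K` be a perfect field of characteristic `p > 0`,
`T(x) = ∑_{i=0}^n a_i x^{p^i} ∈ K[x]` with `a₀ ≠ 0`, and
`S(x) = T(x)^p / x^p = ∑ a_i^p x^{p (p^i - 1)}`.  Define `g(x) = x^p + 1/(T(x)+S(x))`.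
Then `g'(x) = -a₀/(T(x)+S(x))²`, so `g` has no finite critical points other than poles,
and the branch locus of `g : ℙ¹ → ℙ¹` is contained in `{∞}`. -/
theorem stmt_13 (K : Type) [Field K] [PerfectField K] (p : ℕ) [Fact p.Prime] [CharP K p]
    (n : ℕ) (a : Fin (n + 1) → K) (ha : a 0 ≠ 0)
    (T S : K[X])
    (hT : T = ∑ i : Fin (n + 1), C (a i) * X ^ (p ^ (i : ℕ)))
    (hS : S = ∑ i : Fin (n + 1), C ((a i) ^ p) * X ^ (p * (p ^ (i : ℕ) - 1)))
    (g : RatFunc K)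
    (hg : g = algebraMap K[X] (RatFunc K) (X ^ p) +
      (algebraMap K[X] (RatFunc K) (T + S))⁻¹) :
    rDeriv g = - (algebraMap K[X] (RatFunc K) (C (a 0))) /
        (algebraMap K[X] (RatFunc K) (T + S)) ^ 2 ∧
    (∀ x : AlgebraicClosure K,
      2 ≤ ramIdx (ratFuncMap (algebraMap K (AlgebraicClosure K)) g) (OnePoint.some x) →
      rEval (ratFuncMap (algebraMap K (AlgebraicClosure K)) g) (OnePoint.some x)
        = (∞ : OnePoint (AlgebraicClosure K))) ∧
    branchLocus (ratFuncMap (algebraMap K (AlgebraicClosure K)) g)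
      ⊆ {(∞ : OnePoint (AlgebraicClosure K))} :=
  stmt_13_general K p n a ha T S hT hS g hg
end

section
/- Let K be a perfect field of characteristic p > 0 and B ⊆ ℙ¹(K̄) a finite set with 0 ∉ B. Then there exists a rational function f ∈ K(x) such that the induced morphism ℙ¹ → ℙ¹ is ramified at every point of B, has branch locus exactly {∞}, and satisfies f(0) ≠ ∞. -/
open Polynomial OnePoint
open scoped Classical
variable {F : Type*} [Field F]

variable {L : Type*} [Field L]

lemma num_denom_of_coprime {A B : L[X]} (hB : B ≠ 0) (hc : IsCoprime A B) :
    RatFunc.num (algebraMap L[X] (RatFunc L) A / algebraMap _ _ B)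
      = C B.leadingCoeff⁻¹ * A ∧
    RatFunc.denom (algebraMap L[X] (RatFunc L) A / algebraMap _ _ B)
      = C B.leadingCoeff⁻¹ * B := by
  have hg : gcd A B = 1 := by
    rw [← normalize_gcd, normalize_eq_one]
    exact (gcd_isUnit_iff A B).2 hc
  constructor
  · rw [RatFunc.num_div, hg, EuclideanDomain.div_one, EuclideanDomain.div_one]
  · rw [RatFunc.denom_div _ hB, hg, EuclideanDomain.div_one]

lemma coprime_X_of (P : L[X]) (hP : P.eval 0 = 1) : IsCoprime (X : L[X]) P := by
  have hdvd : (X : L[X]) ∣ (P - 1) := by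
    rw [X_dvd_iff]
    simp [coeff_sub, coeff_zero_eq_eval_zero, hP]
  obtain ⟨q, hq⟩ := hdvd
  exact ⟨-q, 1, by linear_combination hq⟩

lemma isCoprime_of_no_common_root [IsAlgClosed L] {A B : L[X]} (hA : A ≠ 0)
    (h : ∀ x, A.eval x = 0 → B.eval x = 0 → False) : IsCoprime A B := by
  rw [← gcd_isUnit_iff A B]
  by_contra hu
  have hd : (gcd A B).degree ≠ 0 := fun hd => hu (Polynomial.isUnit_iff_degree_eq_zero.2 hd)
  obtain ⟨x, hx⟩ := IsAlgClosed.exists_root _ hd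
  have hAx : A.eval x = 0 := by
    obtain ⟨t, ht⟩ := gcd_dvd_left A B
    rw [ht, eval_mul, hx, zero_mul]
  have hBx : B.eval x = 0 := by
    obtain ⟨t, ht⟩ := gcd_dvd_right A B
    rw [ht, eval_mul, hx, zero_mul]
  exact h x hAx hBx

lemma aeval_inv_eq (P : L[X]) : (aeval (RatFunc.X⁻¹ : RatFunc L)) P
    = algebraMap L[X] (RatFunc L) P.reverse / RatFunc.X ^ P.natDegree := by
  have hX : (RatFunc.X : RatFunc L) ≠ 0 := RatFunc.X_ne_zero
  have : Invertible (RatFunc.X⁻¹ : RatFunc L) := invertibleOfNonzero (inv_ne_zero hX)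
  have h := Polynomial.eval₂_reverse_mul_pow (algebraMap L (RatFunc L)) (RatFunc.X⁻¹) P
  rw [invOf_eq_inv, inv_inv] at h
  have h2 : Polynomial.eval₂ (algebraMap L (RatFunc L)) RatFunc.X P.reverse
      = algebraMap L[X] (RatFunc L) P.reverse := by
    rw [← Polynomial.aeval_def, ← RatFunc.algebraMap_X, Polynomial.aeval_algebraMap_apply,
      Polynomial.aeval_X_left_apply]
  rw [h2] at h
  rw [Polynomial.aeval_def, ← h, inv_pow, div_eq_mul_inv]

lemma reverse_root_aux {P : L[X]} {x : L} (hx : x ≠ 0) (h : P.reverse.eval x = 0) :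
    P.eval x⁻¹ = 0 := by
  haveI : Invertible x⁻¹ := invertibleOfNonzero (inv_ne_zero hx)
  have := Polynomial.eval₂_reverse_eq_zero_iff (RingHom.id L) x⁻¹ P
  rw [invOf_eq_inv, inv_inv] at this
  exact this.1 h

noncomputable def myN (p : ℕ) (H : L[X]) : L[X] := (X ^ p - X) * H ^ p + 1

noncomputable def myD (p : ℕ) (H : L[X]) : L[X] := H ^ p

noncomputable def myF (p : ℕ) (H : L[X]) : RatFunc L :=
  algebraMap L[X] (RatFunc L) (myN p H) / algebraMap _ _ (myD p H)

variable {p : ℕ} {H : L[X]}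

lemma myN_coprime : IsCoprime (myN p H) (myD p H) :=
  ⟨1, -(X ^ p - X), by simp only [myN, myD]; ring⟩

lemma myF_num (hH : H.Monic) : (myF p H).num = myN p H := by
  have h := (num_denom_of_coprime (hH.pow p).ne_zero (myN_coprime (p := p) (H := H))).1
  rw [myF, myD, h, (hH.pow p).leadingCoeff, inv_one, map_one, one_mul]

lemma myF_denom (hH : H.Monic) : (myF p H).denom = myD p H := by
  have h := (num_denom_of_coprime (hH.pow p).ne_zero (myN_coprime (p := p) (H := H))).2
  rw [myF, myD, h, (hH.pow p).leadingCoeff, inv_one, map_one, one_mul]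

lemma myM1_monic (hp : 1 < p) (hH : H.Monic) : ((X ^ p - X) * H ^ p : L[X]).Monic := by
  refine Monic.mul ?_ (hH.pow p)
  refine monic_X_pow_sub ?_
  rw [degree_X]
  exact_mod_cast hp

lemma myM1_degree (hp : 1 < p) (hH : H.Monic) :
    ((X ^ p - X) * H ^ p : L[X]).degree = ((p + p * H.natDegree : ℕ) : WithBot ℕ) := by
  rw [degree_mul]
  have h2 : ((X : L[X]) ^ p - X).degree = (p : WithBot ℕ) := by
    rw [degree_sub_eq_left_of_degree_lt, degree_X_pow]
    rw [degree_X_pow, degree_X]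
    exact_mod_cast hp
  rw [h2, degree_pow, degree_eq_natDegree hH.ne_zero, nsmul_eq_mul]
  push_cast
  rfl

lemma myN_monic (hp : 1 < p) (hH : H.Monic) : (myN p H).Monic := by
  refine (myM1_monic hp hH).add_of_left ?_
  rw [myM1_degree hp hH, degree_one]
  exact_mod_cast by positivity

lemma myN_degree (hp : 1 < p) (hH : H.Monic) :
    (myN p H).degree = ((p + p * H.natDegree : ℕ) : WithBot ℕ) := by
  rw [myN, degree_add_eq_left_of_degree_lt, myM1_degree hp hH]
  rw [myM1_degree hp hH, degree_one]
  exact_mod_cast by positivity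

lemma myD_degree (hH : H.Monic) : (myD p H).degree = ((p * H.natDegree : ℕ) : WithBot ℕ) := by
  rw [myD, degree_pow, degree_eq_natDegree hH.ne_zero, nsmul_eq_mul]
  push_cast
  ring

lemma myD_lt_myN (hp : 1 < p) (hH : H.Monic) : (myD p H).degree < (myN p H).degree := by
  rw [myD_degree hH, myN_degree hp hH]
  exact_mod_cast by omega

lemma myF_ramIdx_infty [IsAlgClosed L] (hp : 1 < p) (hH : H.Monic) :
    ramIdx (myF p H) ∞ = p := by
  have hp0 : p ≠ 0 := by omega
  have hNmon := myN_monic hp hH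
  have hDmon : (myD p H).Monic := hH.pow p
  have hRN0 : (myN p H).reverse.eval 0 = 1 := by
    rw [← coeff_zero_eq_eval_zero, coeff_zero_reverse, hNmon.leadingCoeff]
  have hRD0 : (myD p H).reverse.eval 0 = 1 := by
    rw [← coeff_zero_eq_eval_zero, coeff_zero_reverse, hDmon.leadingCoeff]
  have hDrev0 : (myD p H).reverse ≠ 0 := by
    simpa [reverse_eq_zero] using hDmon.ne_zero
  have hinv : invSub (myF p H) = algebraMap L[X] (RatFunc L) (myN p H).reverse
      / (algebraMap L[X] (RatFunc L) ((myD p H).reverse * X ^ p)) := by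
    rw [invSub, RatFunc.eval, myF_num hH, myF_denom hH,
      ← Polynomial.aeval_def, ← Polynomial.aeval_def, aeval_inv_eq, aeval_inv_eq]
    have hX : (RatFunc.X : RatFunc L) ≠ 0 := RatFunc.X_ne_zero
    have hb : algebraMap L[X] (RatFunc L) (myD p H).reverse ≠ 0 :=
      RatFunc.algebraMap_ne_zero hDrev0
    have hnd : (myN p H).natDegree = (myD p H).natDegree + p := by
      have h1 := natDegree_eq_of_degree_eq_some (myN_degree hp hH)
      have h2 := natDegree_eq_of_degree_eq_some (myD_degree (p := p) hH)
      rw [h1, h2]; omega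
    rw [hnd, map_mul, map_pow, RatFunc.algebraMap_X, pow_add]
    field_simp
  have c1 : IsCoprime (X : L[X]) (myN p H).reverse := coprime_X_of _ hRN0
  have c2 : IsCoprime (myD p H).reverse (myN p H).reverse := by
    refine isCoprime_of_no_common_root hDrev0 ?_
    intro x hDx hNx
    have hx0 : x ≠ 0 := by rintro rfl; rw [hNx] at hRN0; exact one_ne_zero hRN0.symm
    have hN' : (myN p H).eval x⁻¹ = 0 := reverse_root_aux hx0 hNx
    have hD' : (myD p H).eval x⁻¹ = 0 := reverse_root_aux hx0 hDx
    obtain ⟨a, b, hab⟩ := myN_coprime (p := p) (H := H)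
    have h := congrArg (Polynomial.eval x⁻¹) hab
    simp [hN', hD'] at h
  have ccop : IsCoprime (myN p H).reverse ((myD p H).reverse * X ^ p) :=
    c2.symm.mul_right c1.symm.pow_right
  have hBB0 : (myD p H).reverse * X ^ p ≠ 0 :=
    mul_ne_zero hDrev0 (pow_ne_zero _ X_ne_zero)
  have hdenom := (num_denom_of_coprime hBB0 ccop).2
  have h1 : ramIdx (myF p H) ∞ = ramIdxFin (invSub (myF p H)) 0 := rfl
  rw [h1, ramIdxFin, hinv, hdenom]
  set c := ((myD p H).reverse * X ^ p).leadingCoeff⁻¹ with hcdef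
  have hc : (C c : L[X]) ≠ 0 := by
    simp only [ne_eq, C_eq_zero, hcdef, inv_eq_zero, leadingCoeff_eq_zero]
    exact hBB0
  have heval : (C c * ((myD p H).reverse * X ^ p)).eval 0 = 0 := by
    simp [eval_mul, eval_pow, zero_pow hp0]
  rw [if_pos heval, rootMultiplicity_mul (mul_ne_zero hc hBB0), rootMultiplicity_mul hBB0,
    rootMultiplicity_C]
  have e1 : rootMultiplicity 0 (myD p H).reverse = 0 :=
    rootMultiplicity_eq_zero (by simp [IsRoot, hRD0])
  have e2 : rootMultiplicity 0 ((X : L[X]) ^ p) = p := by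
    simpa using rootMultiplicity_X_sub_C_pow (0 : L) p
  rw [e1, e2]
  omega

lemma myF_rEval_infty (hp : 1 < p) (hH : H.Monic) : rEval (myF p H) ∞ = ∞ := by
  have h : rEval (myF p H) ∞ = if (myF p H).denom.degree < (myF p H).num.degree then ∞
      else OnePoint.some ((myF p H).num.coeff (myF p H).denom.natDegree
        / (myF p H).denom.leadingCoeff) := rfl
  rw [h, if_pos]
  rw [myF_num hH, myF_denom hH]
  exact myD_lt_myN hp hH

lemma myF_rEval_fin (hH : H.Monic) {x : L} (hx : H.eval x ≠ 0) :
    rEval (myF p H) (OnePoint.some x) ≠ ∞ := by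
  have h : rEval (myF p H) (OnePoint.some x) = if (myF p H).denom.eval x = 0 then ∞
      else OnePoint.some ((myF p H).num.eval x / (myF p H).denom.eval x) := rfl
  rw [h, if_neg]
  · exact OnePoint.coe_ne_infty _
  · rw [myF_denom hH]
    simp only [myD, eval_pow]
    exact pow_ne_zero p hx

lemma myF_ramIdx_root (hp : 1 < p) (hH : H.Monic) {x : L} (hx : H.eval x = 0) :
    p ≤ ramIdx (myF p H) (OnePoint.some x) := by
  have h1 : ramIdx (myF p H) (OnePoint.some x) = ramIdxFin (myF p H) x := rfl
  have hD0 : (myD p H).eval x = 0 := by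
    simp [myD, eval_pow, hx, zero_pow (show p ≠ 0 by omega)]
  rw [h1, ramIdxFin, myF_denom hH, if_pos hD0, myD]
  rw [le_rootMultiplicity_iff (hH.pow p).ne_zero]
  have : (X - C x) ∣ H := dvd_iff_isRoot.2 hx
  exact pow_dvd_pow_of_dvd this p

lemma myF_ramIdx_unram [CharP L p] (hp : 1 < p) (hH : H.Monic) {x : L}
    (hx : H.eval x ≠ 0) : ramIdx (myF p H) (OnePoint.some x) ≤ 1 := by
  have h1 : ramIdx (myF p H) (OnePoint.some x) = ramIdxFin (myF p H) x := rfl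
  have hD0 : (myD p H).eval x ≠ 0 := by
    simp only [myD, eval_pow]
    exact pow_ne_zero p hx
  rw [h1, ramIdxFin, myF_denom hH, if_neg hD0, myF_num hH]
  set cc := (myN p H).eval x / (myD p H).eval x with hccdef
  set G : L[X] := myN p H - C cc * myD p H with hGdef
  by_contra hcon
  push_neg at hcon
  have h2 : 2 ≤ rootMultiplicity x G := hcon
  have hdvd : (X - C x) ^ 2 ∣ G :=
    dvd_trans (pow_dvd_pow _ h2) (pow_rootMultiplicity_dvd G x)
  obtain ⟨q, hq⟩ := hdvd
  -- derivative of G is -H^p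
  have hder : derivative G = -(H ^ p) := by
    have hchar : ((p : L)) = 0 := CharP.cast_eq_zero L p
    rw [hGdef, myN, myD]
    simp only [derivative_sub, derivative_add, derivative_mul, derivative_one, derivative_C,
      derivative_pow, derivative_X_pow, derivative_X, hchar, map_zero]
    ring
  have hev1 : (derivative G).eval x ≠ 0 := by
    rw [hder]
    simp only [eval_neg, eval_pow, ne_eq, neg_eq_zero]
    exact fun h => hx (pow_eq_zero_iff (by omega : p ≠ 0) |>.1 h)
  have hev2 : (derivative G).eval x = 0 := by
    rw [hq]
    rw [derivative_mul, derivative_pow, derivative_sub, derivative_X, derivative_C]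
    simp
  exact hev1 hev2

lemma myF_rEval_root (hp : 1 < p) (hH : H.Monic) {x : L} (hx : H.eval x = 0) :
    rEval (myF p H) (OnePoint.some x) = ∞ := by
  have h : rEval (myF p H) (OnePoint.some x) = if (myF p H).denom.eval x = 0 then ∞
      else OnePoint.some ((myF p H).num.eval x / (myF p H).denom.eval x) := rfl
  rw [h, if_pos]
  rw [myF_denom hH, myD]
  simp [eval_pow, hx, zero_pow (show p ≠ 0 by omega)]

lemma myF_branch [IsAlgClosed L] [CharP L p] (hp : 1 < p) (hH : H.Monic) :
    branchLocus (myF p H) = {(∞ : OnePoint L)} := by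
  ext w
  simp only [branchLocus, Set.mem_setOf_eq, Set.mem_singleton_iff]
  constructor
  · rintro ⟨a, hev, hram⟩
    cases a with
    | infty => rw [← hev, myF_rEval_infty hp hH]
    | coe x =>
      by_cases hx : H.eval x = 0
      · rw [← hev, myF_rEval_root hp hH hx]
      · exfalso
        have := myF_ramIdx_unram hp hH hx
        omega
  · rintro rfl
    refine ⟨∞, myF_rEval_infty hp hH, ?_⟩
    rw [myF_ramIdx_infty hp hH]
    omega

/-- Let `K` be a perfect field of characteristic `p > 0` and `B ⊆ ℙ¹(K̄)` a finite set
with `0 ∉ B`.  Then there exists a rational function `f ∈ K(x)` such that the induced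
morphism `ℙ¹ → ℙ¹` is ramified at every point of `B`, has branch locus exactly `{∞}`,
and satisfies `f(0) ≠ ∞`. -/
theorem stmt_14 (K : Type) [Field K] [PerfectField K] (p : ℕ) [Fact p.Prime] [CharP K p]
    (B : Finset (OnePoint (AlgebraicClosure K)))
    (h0 : OnePoint.some (0 : AlgebraicClosure K) ∉ B) :
    ∃ f : RatFunc K, (∀ c : K, f ≠ RatFunc.C c) ∧
      (∀ b ∈ B, 2 ≤ ramIdx (ratFuncMap (algebraMap K (AlgebraicClosure K)) f) b) ∧
      branchLocus (ratFuncMap (algebraMap K (AlgebraicClosure K)) f)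
        = {(∞ : OnePoint (AlgebraicClosure K))} ∧
      rEval (ratFuncMap (algebraMap K (AlgebraicClosure K)) f)
          (OnePoint.some (0 : AlgebraicClosure K))
        ≠ (∞ : OnePoint (AlgebraicClosure K)) := by
  classical
  haveI : CharP (AlgebraicClosure K) p :=
    charP_of_injective_algebraMap (algebraMap K (AlgebraicClosure K)).injective p
  have hp : 1 < p := (Fact.out : p.Prime).one_lt
  set h : K[X] := ∏ b ∈ B, Option.elim (b : Option (AlgebraicClosure K)) 1
    (fun x => minpoly K x) with hhdef
  have hmono : h.Monic := by
    refine monic_prod_of_monic _ _ (fun b hb => ?_)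
    cases b with
    | infty => exact monic_one
    | coe x => exact minpoly.monic (Algebra.IsIntegral.isIntegral x)
  have hev0 : h.eval 0 ≠ 0 := by
    rw [hhdef, eval_prod]
    rw [Finset.prod_ne_zero_iff]
    intro b hb
    cases b with
    | infty =>
      simp [show (Option.elim (∞ : Option (AlgebraicClosure K)) 1
        fun x => minpoly K x : K[X]) = 1 from rfl]
    | coe x =>
      have hx0 : x ≠ 0 := by
        rintro rfl
        exact h0 hb
      show ¬ (minpoly K x).eval 0 = 0
      rw [← coeff_zero_eq_eval_zero]
      exact minpoly.coeff_zero_ne_zero (Algebra.IsIntegral.isIntegral x) hx0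
  set H : (AlgebraicClosure K)[X] := h.map (algebraMap K (AlgebraicClosure K)) with hHdef
  have Hmon : H.Monic := hmono.map _
  have Hev0 : H.eval 0 ≠ 0 := by
    rw [hHdef, eval_map, eval₂_at_zero, coeff_zero_eq_eval_zero]
    simpa using hev0
  have Hroot : ∀ x : AlgebraicClosure K, OnePoint.some x ∈ B → H.eval x = 0 := by
    intro x hx
    rw [hHdef, hhdef, Polynomial.map_prod, eval_prod]
    refine Finset.prod_eq_zero hx ?_
    show ((minpoly K x).map (algebraMap K (AlgebraicClosure K))).eval x = 0
    rw [eval_map, ← aeval_def, minpoly.aeval]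
  have fmap : ratFuncMap (algebraMap K (AlgebraicClosure K)) (myF p h) = myF p H := by
    rw [myF, ratFuncMap, RatFunc.coe_mapRingHom_eq_coe_map, RatFunc.map_apply_div, myF]
    have e1 : (Polynomial.mapRingHom (algebraMap K (AlgebraicClosure K))) (myN p h)
        = myN p H := by
      simp [myN, hHdef, Polynomial.map_add, Polynomial.map_mul, Polynomial.map_sub,
        Polynomial.map_pow, Polynomial.map_one, Polynomial.map_X, coe_mapRingHom]
    have e2 : (Polynomial.mapRingHom (algebraMap K (AlgebraicClosure K))) (myD p h)
        = myD p H := by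
      simp [myD, hHdef, Polynomial.map_pow, coe_mapRingHom]
    rw [e1, e2]
  refine ⟨myF p h, ?_, ?_, ?_, ?_⟩
  · intro c hc
    have h1 := congrArg RatFunc.num hc
    rw [myF_num hmono, RatFunc.num_C] at h1
    have h2 := congrArg natDegree h1
    rw [natDegree_C, natDegree_eq_of_degree_eq_some (myN_degree hp hmono)] at h2
    omega
  · intro b hb
    rw [fmap]
    cases b with
    | infty =>
      rw [myF_ramIdx_infty hp Hmon]
      omega
    | coe x =>
      exact le_trans (by omega) (myF_ramIdx_root hp Hmon (Hroot x hb))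
  · rw [fmap]
    exact myF_branch hp Hmon
  · rw [fmap]
    exact myF_rEval_fin Hmon Hev0
end
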